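/- arXiv:1804.03561 — 6 statements merged into one kernel-verified Lean document; each statement's English description precedes it below -/
import Mathlib

section
/- Let F : ℝ^d → ℝ be continuously differentiable and Lipschitz continuous. Define the functional 𝔉₀ : L²(S¹; ℝ^d) → ℝ by 𝔉₀(ℓ) = ∫_{S¹} F(ℓ(x)) dx. Then 𝔉₀ is Fréchet differentiable and its Fréchet derivative at ℓ is the element ∇F ∘ ℓ of L²(S¹; ℝ^d), i.e. D𝔉₀(ℓ)(h) = ∫_{S¹} ∇F(ℓ(x)) · h(x) dx for all h ∈ L²(S¹; ℝ^d). -/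
open MeasureTheory

noncomputable section

open MeasureTheory Filter Topology

noncomputable section

namespace Stmt0Aux

variable {d : ℕ} {F : EuclideanSpace ℝ (Fin d) → ℝ} {K : NNReal}

local notation "E" => EuclideanSpace ℝ (Fin d)

lemma inner_gradient_eq (a v : E) :
    (inner ℝ (gradient F a) v : ℝ) = fderiv ℝ F a v := by
  rw [gradient, ← InnerProductSpace.toDual_apply_apply, LinearIsometryEquiv.apply_symm_apply]

lemma grad_cont (hF : ContDiff ℝ 1 F) : Continuous (gradient F) := by
  show Continuous fun x => (InnerProductSpace.toDual ℝ _).symm (fderiv ℝ F x)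
  exact (LinearIsometryEquiv.continuous _).comp (hF.continuous_fderiv one_ne_zero)

lemma grad_norm_le (hLip : LipschitzWith K F) (a : E) : ‖gradient F a‖ ≤ K := by
  rw [gradient, LinearIsometryEquiv.norm_map]
  exact norm_fderiv_le_of_lipschitz ℝ hLip

/-- The modulus function. -/
def Phi (F : EuclideanSpace ℝ (Fin d) → ℝ) (p : EuclideanSpace ℝ (Fin d) × EuclideanSpace ℝ (Fin d)) : ℝ :=
  ∫ t in (0:ℝ)..1, ‖gradient F (p.1 + t • p.2) - gradient F p.1‖

lemma Phi_cont (hF : ContDiff ℝ 1 F) : Continuous (Phi F) := by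
  apply intervalIntegral.continuous_parametric_intervalIntegral_of_continuous'
  apply Continuous.norm
  exact ((grad_cont hF).comp (by fun_prop)).sub ((grad_cont hF).comp (by fun_prop))

lemma Phi_nonneg (p : E × E) : 0 ≤ Phi F p :=
  intervalIntegral.integral_nonneg zero_le_one (fun _ _ => norm_nonneg _)

lemma Phi_zero (a : E) : Phi F (a, 0) = 0 := by
  simp [Phi]

lemma Phi_le (hF : ContDiff ℝ 1 F) (hLip : LipschitzWith K F) (p : E × E) : Phi F p ≤ 2 * K := by
  have : Phi F p ≤ ∫ _t in (0:ℝ)..1, (2 * K : ℝ) := by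
    apply intervalIntegral.integral_mono_on zero_le_one _ (by simp)
    · intro t _
      calc ‖gradient F (p.1 + t • p.2) - gradient F p.1‖
          ≤ ‖gradient F (p.1 + t • p.2)‖ + ‖gradient F p.1‖ := norm_sub_le _ _
        _ ≤ K + K := add_le_add (grad_norm_le hLip _) (grad_norm_le hLip _)
        _ = 2 * K := by ring
    · apply Continuous.intervalIntegrable
      apply Continuous.norm
      exact ((grad_cont hF).comp (by fun_prop)).sub ((grad_cont hF).comp (by fun_prop))
  simpa using this

lemma taylor_bound (hF : ContDiff ℝ 1 F) (a v : E) :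
    |F (a + v) - F a - (inner ℝ (gradient F a) v : ℝ)| ≤ Phi F (a, v) * ‖v‖ := by
  have hderiv : ∀ t : ℝ, HasDerivAt (fun s : ℝ => F (a + s • v))
      ((inner ℝ (gradient F (a + t • v)) v : ℝ)) t := by
    intro t
    have h1 : HasFDerivAt F (fderiv ℝ F (a + t • v)) (a + t • v) :=
      (hF.differentiable one_ne_zero _).hasFDerivAt
    have h2 : HasDerivAt (fun s : ℝ => a + s • v) v t := by
      simpa using ((hasDerivAt_id t).smul_const v).const_add a
    have h3 := h1.comp_hasDerivAt t h2
    rwa [inner_gradient_eq] 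
  have hcont : Continuous fun t : ℝ => (inner ℝ (gradient F (a + t • v)) v : ℝ) := by
    apply Continuous.inner
    · exact (grad_cont hF).comp (by fun_prop)
    · exact continuous_const
  have hFTC : F (a + v) - F a = ∫ t in (0:ℝ)..1, (inner ℝ (gradient F (a + t • v)) v : ℝ) := by
    have := intervalIntegral.integral_eq_sub_of_hasDerivAt
      (f := fun s : ℝ => F (a + s • v)) (a := (0:ℝ)) (b := 1)
      (fun t _ => hderiv t) (hcont.intervalIntegrable 0 1)
    simpa using this.symm
  have hconst : (inner ℝ (gradient F a) v : ℝ) = ∫ _t in (0:ℝ)..1, (inner ℝ (gradient F a) v : ℝ) := by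
    simp
  rw [hFTC, hconst, ← intervalIntegral.integral_sub (hcont.intervalIntegrable 0 1)
    (intervalIntegrable_const)]
  calc |∫ t in (0:ℝ)..1, ((inner ℝ (gradient F (a + t • v)) v : ℝ) - inner ℝ (gradient F a) v)|
      ≤ ∫ t in (0:ℝ)..1, |(inner ℝ (gradient F (a + t • v)) v : ℝ) - inner ℝ (gradient F a) v| := by
        exact intervalIntegral.abs_integral_le_integral_abs zero_le_one
    _ ≤ ∫ t in (0:ℝ)..1, ‖gradient F (a + t • v) - gradient F a‖ * ‖v‖ := by
        apply intervalIntegral.integral_mono_on zero_le_one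
        · exact (hcont.sub continuous_const).abs.intervalIntegrable 0 1
        · exact ((((grad_cont hF).comp (by fun_prop)).sub continuous_const).norm.mul
            continuous_const).intervalIntegrable 0 1
        · intro t _
          rw [← inner_sub_left]
          exact (abs_real_inner_le_norm _ _)
    _ = Phi F (a, v) * ‖v‖ := by
        rw [Phi, ← intervalIntegral.integral_mul_const]

local notation "μ" => (volume : Measure UnitAddCircle)

lemma norm_sq_identity (w : Lp (EuclideanSpace ℝ (Fin d)) 2 μ) :
    (∫ x, ‖w x‖ ^ (2:ℝ) ∂μ) ^ ((1:ℝ)/2) = ‖w‖ := by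
  have h1 : ∫ x, ‖w x‖ ^ (2:ℝ) ∂μ = ∫ x, (inner ℝ (w x) (w x) : ℝ) ∂μ := by
    apply integral_congr_ae
    filter_upwards with x
    rw [real_inner_self_eq_norm_sq, show (2:ℝ) = ((2:ℕ):ℝ) by norm_num, Real.rpow_natCast]
  rw [h1, ← L2.inner_def, real_inner_self_eq_norm_sq, ← Real.sqrt_eq_rpow,
    Real.sqrt_sq (norm_nonneg _)]

lemma intF (hF : ContDiff ℝ 1 F) (hLip : LipschitzWith K F)
    (ℓ' : Lp (EuclideanSpace ℝ (Fin d)) 2 μ) : Integrable (fun x => F (ℓ' x)) μ := by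
  have hmeas : AEStronglyMeasurable (fun x => F (ℓ' x)) μ :=
    hF.continuous.comp_aestronglyMeasurable (Lp.aestronglyMeasurable ℓ')
  have hbd : Integrable (fun x => |F 0| + (K : ℝ) * ‖ℓ' x‖) μ := by
    apply (integrable_const _).add
    exact (((Lp.memLp ℓ').integrable one_le_two).norm).const_mul _
  apply hbd.mono' hmeas
  filter_upwards with x
  have := hLip.dist_le_mul (ℓ' x) 0
  simp only [dist_eq_norm, sub_zero] at this
  calc ‖F (ℓ' x)‖ = |F (ℓ' x)| := rfl
    _ ≤ |F (ℓ' x) - F 0| + |F 0| := by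
        simpa using abs_add_le (F (ℓ' x) - F 0) (F 0)
    _ ≤ (K : ℝ) * ‖ℓ' x‖ + |F 0| := by
        apply add_le_add_left
        simpa [Real.dist_eq] using this
    _ = |F 0| + (K : ℝ) * ‖ℓ' x‖ := by ring

lemma intInner (hF : ContDiff ℝ 1 F) (hLip : LipschitzWith K F)
    (ℓ h : Lp (EuclideanSpace ℝ (Fin d)) 2 μ) :
    Integrable (fun x => (inner ℝ (gradient F (ℓ x)) (h x) : ℝ)) μ := by
  have hmeas : AEStronglyMeasurable (fun x => (inner ℝ (gradient F (ℓ x)) (h x) : ℝ)) μ :=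
    AEStronglyMeasurable.inner
      ((grad_cont hF).comp_aestronglyMeasurable (Lp.aestronglyMeasurable ℓ))
      (Lp.aestronglyMeasurable h)
  have hbd : Integrable (fun x => (K : ℝ) * ‖h x‖) μ :=
    (((Lp.memLp h).integrable one_le_two).norm).const_mul _
  apply hbd.mono' hmeas
  filter_upwards with x
  calc ‖(inner ℝ (gradient F (ℓ x)) (h x) : ℝ)‖ ≤ ‖gradient F (ℓ x)‖ * ‖h x‖ :=
      norm_inner_le_norm _ _
    _ ≤ (K : ℝ) * ‖h x‖ := by
      apply mul_le_mul_of_nonneg_right (grad_norm_le hLip _) (norm_nonneg _)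

end Stmt0Aux

set_option maxHeartbeats 1000000 in
set_option synthInstance.maxHeartbeats 400000 in
/-- If `F : ℝ^d → ℝ` is continuously differentiable and Lipschitz, then the
functional `𝔉₀(ℓ) = ∫_{S¹} F(ℓ(x)) dx` on `L²(S¹;ℝ^d)` is Fréchet differentiable at every `ℓ`,
with derivative `h ↦ ∫_{S¹} ∇F(ℓ(x)) · h(x) dx`, i.e. `D𝔉₀(ℓ) = ∇F ∘ ℓ`. -/
theorem stmt0 (d : ℕ) (F : EuclideanSpace ℝ (Fin d) → ℝ) (K : NNReal)
    (hF : ContDiff ℝ 1 F) (hLip : LipschitzWith K F)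
    (ℓ : Lp (EuclideanSpace ℝ (Fin d)) 2 (volume : Measure UnitAddCircle)) :
    ∃ D : Lp (EuclideanSpace ℝ (Fin d)) 2 (volume : Measure UnitAddCircle) →L[ℝ] ℝ,
      HasFDerivAt
        (fun ℓ' : Lp (EuclideanSpace ℝ (Fin d)) 2 (volume : Measure UnitAddCircle) =>
          ∫ x, F (ℓ' x)) D ℓ ∧
      ∀ h : Lp (EuclideanSpace ℝ (Fin d)) 2 (volume : Measure UnitAddCircle),
        D h = ∫ x, (inner ℝ (gradient F (ℓ x)) (h x) : ℝ) := by
  classical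
  open Stmt0Aux Filter Topology Asymptotics in
  have hG0meas : AEStronglyMeasurable (fun x => gradient F (ℓ x)) (volume : Measure UnitAddCircle) :=
    (grad_cont hF).comp_aestronglyMeasurable (Lp.aestronglyMeasurable ℓ)
  have hG0mem : MemLp (fun x => gradient F (ℓ x)) 2 (volume : Measure UnitAddCircle) :=
    MemLp.of_bound hG0meas K (Filter.Eventually.of_forall fun x => grad_norm_le hLip _)
  set G : Lp (EuclideanSpace ℝ (Fin d)) 2 (volume : Measure UnitAddCircle) := hG0mem.toLp _ with hG
  set D : Lp (EuclideanSpace ℝ (Fin d)) 2 (volume : Measure UnitAddCircle) →L[ℝ] ℝ := innerSL ℝ G with hDdef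
  have hD : ∀ h : Lp (EuclideanSpace ℝ (Fin d)) 2 (volume : Measure UnitAddCircle),
      D h = ∫ x, (inner ℝ (gradient F (ℓ x)) (h x) : ℝ) ∂(volume : Measure UnitAddCircle) := by
    intro h
    have h1 : D h = ∫ x, (inner ℝ (G x) (h x) : ℝ) ∂(volume : Measure UnitAddCircle) := L2.inner_def G h
    rw [h1]
    apply integral_congr_ae
    filter_upwards [hG0mem.coeFn_toLp] with x hx
    rw [hx]
  refine ⟨D, ?_, fun h => hD h⟩
  rw [hasFDerivAt_iff_isLittleO_nhds_zero]
  have hq0 : ∀ w : Lp (EuclideanSpace ℝ (Fin d)) 2 (volume : Measure UnitAddCircle),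
      (∫ x, F ((ℓ + w) x) ∂(volume : Measure UnitAddCircle)) - (∫ x, F (ℓ x) ∂(volume : Measure UnitAddCircle)) - D w =
        ∫ x, (F (ℓ x + w x) - F (ℓ x) - (inner ℝ (gradient F (ℓ x)) (w x) : ℝ)) ∂(volume : Measure UnitAddCircle) := by
    intro w
    have e1 : (∫ x, F ((ℓ + w) x) ∂(volume : Measure UnitAddCircle)) = ∫ x, F (ℓ x + w x) ∂(volume : Measure UnitAddCircle) := by
      apply integral_congr_ae
      filter_upwards [Lp.coeFn_add ℓ w] with x hx
      rw [hx]; rfl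
    have i1 : Integrable (fun x => F (ℓ x + w x)) (volume : Measure UnitAddCircle) := by
      apply (integrable_congr ?_).mp (intF hF hLip (ℓ + w))
      filter_upwards [Lp.coeFn_add ℓ w] with x hx
      rw [hx]; rfl
    have i2 : Integrable (fun x => F (ℓ x + w x) - F (ℓ x)) (volume : Measure UnitAddCircle) :=
      i1.sub (intF hF hLip ℓ)
    rw [e1, hD w, ← integral_sub i1 (intF hF hLip ℓ), ← integral_sub i2 (intInner hF hLip ℓ w)]
  rw [← isLittleO_norm_right]
  rw [isLittleO_iff_tendsto (fun w hw => by
    rw [norm_eq_zero] at hw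
    subst hw
    simp [hq0])]
  rw [tendsto_iff_seq_tendsto]
  intro u hu
  apply tendsto_of_subseq_tendsto
  intro ns hns
  obtain ⟨ms, hms, hae⟩ := (tendstoInMeasure_of_tendsto_Lp (hu.comp hns)).exists_seq_tendsto_ae
  refine ⟨ms, ?_⟩
  set v : ℕ → Lp (EuclideanSpace ℝ (Fin d)) 2 (volume : Measure UnitAddCircle) :=
    fun n => u (ns (ms n)) with hv
  have hae0 : ∀ᵐ x ∂(volume : Measure UnitAddCircle),
      Tendsto (fun i => v i x) atTop (𝓝 0) := by
    filter_upwards [hae,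
      Lp.coeFn_zero (EuclideanSpace ℝ (Fin d)) 2 (volume : Measure UnitAddCircle)] with x hx h0
    rw [h0] at hx
    exact hx
  set g : ℕ → UnitAddCircle → ℝ := fun n x => Phi F (ℓ x, v n x) with hgdef
  have hgmeas : ∀ n, AEStronglyMeasurable (g n) (volume : Measure UnitAddCircle) := fun n =>
    (Phi_cont hF).comp_aestronglyMeasurable
      ((Lp.aestronglyMeasurable ℓ).prodMk (Lp.aestronglyMeasurable (v n)))
  have hgbd : ∀ n x, |g n x| ≤ 2 * (K:ℝ) := fun n x => by
    rw [abs_of_nonneg (Phi_nonneg _)]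
    exact Phi_le hF hLip _
  have hgmem : ∀ n, MemLp (g n) 2 (volume : Measure UnitAddCircle) := fun n =>
    MemLp.of_bound (hgmeas n) _ (Filter.Eventually.of_forall fun x => hgbd n x)
  set B : ℕ → ℝ := fun n => ∫ x, (g n x)^2 with hBdef
  have hB0 : Tendsto B atTop (𝓝 0) := by
    have hdom := tendsto_integral_of_dominated_convergence
      (μ := (volume : Measure UnitAddCircle))
      (F := fun n x => (g n x)^2) (f := fun _ => (0:ℝ)) (bound := fun _ => (2*(K:ℝ))^2)
      (fun n => by simp_rw [pow_two]; exact (hgmeas n).mul (hgmeas n))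
      (integrable_const _)
      (fun n => Filter.Eventually.of_forall fun x => by
        rw [Real.norm_eq_abs, abs_pow]
        exact pow_le_pow_left₀ (abs_nonneg _) (hgbd n x) 2)
      ?_
    · simpa using hdom
    · filter_upwards [hae0] with x hx
      have h1 : Tendsto (fun n => g n x) atTop (𝓝 0) := by
        have := ((Phi_cont hF).tendsto (ℓ x, 0)).comp
          (tendsto_const_nhds.prodMk_nhds hx)
        simp only [Phi_zero] at this; exact this
      simpa using h1.pow 2
  have hAt : Tendsto (fun n => Real.sqrt (B n)) atTop (𝓝 0) := by
    have := (Real.continuous_sqrt.tendsto 0).comp hB0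
    simp only [Real.sqrt_zero] at this; exact this
  apply squeeze_zero_norm _ hAt
  intro n
  simp only [Function.comp_apply]
  have hBnn : 0 ≤ B n := integral_nonneg fun x => sq_nonneg _
  have hkey : |(∫ x, F ((ℓ + v n) x)) - (∫ x, F (ℓ x)) - D (v n)| ≤ Real.sqrt (B n) * ‖v n‖ := by
    rw [hq0 (v n)]
    have i1 : Integrable (fun x => F (ℓ x + v n x)) (volume : Measure UnitAddCircle) := by
      apply (integrable_congr ?_).mp (intF hF hLip (ℓ + v n))
      filter_upwards [Lp.coeFn_add ℓ (v n)] with x hx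
      rw [hx]; rfl
    have ir : Integrable
        (fun x => F (ℓ x + v n x) - F (ℓ x) - (inner ℝ (gradient F (ℓ x)) (v n x) : ℝ))
        (volume : Measure UnitAddCircle) :=
      (i1.sub (intF hF hLip ℓ)).sub (intInner hF hLip ℓ (v n))
    have hprod : Integrable (fun x => g n x * ‖v n x‖) (volume : Measure UnitAddCircle) := by
      have h121 : (1:ENNReal) / 1 = 1 / 2 + 1 / 2 := by
        rw [ENNReal.div_add_div_same, one_add_one_eq_two,
          ENNReal.div_self one_ne_zero ENNReal.one_ne_top,
          ENNReal.div_self (by norm_num) (by norm_num)]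
      have hmem : MemLp (g n • fun x => ‖(v n : UnitAddCircle → EuclideanSpace ℝ (Fin d)) x‖) 1
          (volume : Measure UnitAddCircle) :=
        MemLp.smul (r := 1) (Lp.memLp (v n)).norm (hgmem n)
      exact memLp_one_iff_integrable.mp hmem
    calc |∫ x, (F (ℓ x + v n x) - F (ℓ x) - (inner ℝ (gradient F (ℓ x)) (v n x) : ℝ))|
        ≤ ∫ x, ‖F (ℓ x + v n x) - F (ℓ x) - (inner ℝ (gradient F (ℓ x)) (v n x) : ℝ)‖ :=
          by rw [← Real.norm_eq_abs]; exact norm_integral_le_integral_norm _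
      _ ≤ ∫ x, g n x * ‖v n x‖ := by
          apply integral_mono ir.norm hprod
          intro x
          simpa [Real.norm_eq_abs] using taylor_bound hF (ℓ x) (v n x)
      _ ≤ (∫ x, ‖g n x‖^(2:ℝ)) ^ ((1:ℝ)/2) * (∫ x, ‖(v n) x‖^(2:ℝ)) ^ ((1:ℝ)/2) := by
          have hpq : Real.HolderConjugate 2 2 := Real.HolderConjugate.two_two
          have h1 : ∫ x, g n x * ‖v n x‖
              = ∫ x, ‖g n x‖ * ‖(fun y : UnitAddCircle => ‖v n y‖) x‖ := by
            apply integral_congr_ae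
            filter_upwards with x
            rw [Real.norm_eq_abs, abs_of_nonneg (Phi_nonneg _), norm_norm]
          rw [h1]
          have hg2 : MemLp (g n) (ENNReal.ofReal 2) (volume : Measure UnitAddCircle) := by
            rw [ENNReal.ofReal_ofNat]
            exact hgmem n
          have hw2 : MemLp (fun y : UnitAddCircle => ‖(v n : Lp (EuclideanSpace ℝ (Fin d)) 2
              (volume : Measure UnitAddCircle)) y‖) (ENNReal.ofReal 2)
              (volume : Measure UnitAddCircle) := by
            rw [ENNReal.ofReal_ofNat]
            exact (Lp.memLp (v n)).norm
          have hCS := integral_mul_norm_le_Lp_mul_Lq (μ := (volume : Measure UnitAddCircle))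
            hpq hg2 hw2
          simpa [norm_norm] using hCS
      _ = Real.sqrt (B n) * ‖v n‖ := by
          rw [norm_sq_identity (v n)]
          congr 1
          have h2 : ∫ x, ‖g n x‖^(2:ℝ) = B n := by
            apply integral_congr_ae
            filter_upwards with x
            rw [Real.norm_eq_abs, show (2:ℝ) = ((2:ℕ):ℝ) by norm_num, Real.rpow_natCast,
              sq_abs]
          rw [h2, Real.sqrt_eq_rpow]
  show ‖(((∫ x, F ((ℓ + v n) x)) - ∫ x, F (ℓ x)) - D (v n)) / ‖v n‖‖ ≤ Real.sqrt (B n)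
  by_cases hw : v n = 0
  · have : (∫ x, F ((ℓ + v n) x)) - (∫ x, F (ℓ x)) - D (v n) = 0 := by
      rw [hw]
      simp
    rw [this]
    simpa using Real.sqrt_nonneg (B n)
  · have hpos : 0 < ‖v n‖ := norm_pos_iff.mpr hw
    rw [norm_div, Real.norm_eq_abs, Real.norm_eq_abs, abs_of_pos hpos,
      div_le_iff₀ hpos]
    exact hkey
end
end
end

section
/- Let g₁, g₂ : [0,T] → [0,∞) be bounded measurable functions such that g₁(t) ≤ C₁ + C₂ ∫_t^T g₂(s)/√(s−t) ds for all t ∈ [0,T], for some constants C₁, C₂ ≥ 0. Then there exist constants λ, μ > 0, depending only on C₂ and T, such that ∫_0^T g₁(t) e^{λt} dt ≤ μ C₁ + (1/2) ∫_0^T g₂(t) e^{λt} dt, and sup_{0≤t≤T} g₁(t) ≤ μ C₁ + 2 C₂² ∫_0^T g₂(t) dt + (1/2) sup_{0≤t≤T} g₂(t). In particular, if g₁ = g₂, then g₁ is bounded everywhere on [0,T] by μ′ C₁ for a constant μ′ depending only on C₂ and T. -/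
open MeasureTheory Set
open scoped ENNReal

noncomputable section

set_option maxHeartbeats 1000000
section GronwallAux


lemma aux_inv_sqrt (u : ℝ) : (Real.sqrt u)⁻¹ = u ^ (-(1/2) : ℝ) := by
  rcases le_or_gt 0 u with hu | hu
  · rw [Real.rpow_neg hu, ← Real.sqrt_eq_rpow]
  · rw [Real.sqrt_eq_zero'.mpr hu.le, Real.rpow_def_of_neg hu,
      show (-(1/2) : ℝ) * Real.pi = -(Real.pi/2) by ring, Real.cos_neg,
      Real.cos_pi_div_two, mul_zero, inv_zero]

lemma aux_kern_nonneg (u : ℝ) : 0 ≤ u ^ (-(1/2) : ℝ) := by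
  rw [← aux_inv_sqrt]; positivity

lemma aux_kern_intble (c a b : ℝ) :
    IntegrableOn (fun s => (s - c) ^ (-(1/2) : ℝ)) (Ioc a b) := by
  have h := intervalIntegral.intervalIntegrable_rpow' (a := a - c) (b := b - c)
    (r := -(1/2)) (by norm_num)
  have h2 := h.comp_sub_right c
  simp only [sub_add_cancel] at h2
  exact h2.1

lemma aux_kern_intble' (c a b : ℝ) :
    IntegrableOn (fun t => (c - t) ^ (-(1/2) : ℝ)) (Ioc a b) := by
  have h := intervalIntegral.intervalIntegrable_rpow' (a := c - a) (b := c - b)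
    (r := -(1/2)) (by norm_num)
  have h2 := h.comp_sub_left c
  simp only [sub_sub_cancel] at h2
  exact h2.1

lemma aux_kern_int (a b : ℝ) (h : a ≤ b) :
    ∫ s in Ioc a b, (s - a) ^ (-(1/2) : ℝ) = 2 * Real.sqrt (b - a) := by
  rw [← intervalIntegral.integral_of_le h,
    intervalIntegral.integral_comp_sub_right (fun s => s ^ (-(1/2) : ℝ)) a, sub_self,
    integral_rpow (Or.inl (by norm_num))]
  rw [Real.sqrt_eq_rpow]
  norm_num
  ring

lemma aux_kern_int' (r s : ℝ) (h : r ≤ s) :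
    ∫ t in Ioc r s, (s - t) ^ (-(1/2) : ℝ) = 2 * Real.sqrt (s - r) := by
  rw [← intervalIntegral.integral_of_le h,
    intervalIntegral.integral_comp_sub_left (fun u => u ^ (-(1/2) : ℝ)) s, sub_self,
    integral_rpow (Or.inl (by norm_num))]
  rw [Real.sqrt_eq_rpow]
  norm_num
  ring

lemma aux_K (T C2 lam s : ℝ) (hT : 0 < T) (hC2 : 0 ≤ C2) (hlam1 : 1 ≤ lam)
    (hlam2 : 36 * C2 ^ 2 ≤ lam) (hs0 : 0 ≤ s) (hsT : s ≤ T) :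
    ∫ t in Icc (0:ℝ) T, C2 * Real.exp (lam * t) * (s - t) ^ (-(1/2) : ℝ)
      ≤ Real.exp (lam * s) * (1/2) := by
  have hlam0 : (0:ℝ) < lam := by linarith
  have hsql : (0:ℝ) < Real.sqrt lam := Real.sqrt_pos.mpr hlam0
  set φ : ℝ → ℝ := fun t => C2 * Real.exp (lam * t) * (s - t) ^ (-(1/2) : ℝ) with hφdef
  -- integrability
  have hker : IntegrableOn (fun t => (s - t) ^ (-(1/2) : ℝ)) (Icc 0 T) := by
    rw [integrableOn_Icc_iff_integrableOn_Ioc]; exact aux_kern_intble' s 0 T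
  have hφm : Measurable φ := by fun_prop
  have hφint : IntegrableOn φ (Icc 0 T) := by
    apply Integrable.bdd_mul (c := C2 * Real.exp (lam * T)) hker
      ((measurable_const.mul ((measurable_const_mul lam).exp)).aestronglyMeasurable)
    refine ae_restrict_of_forall_mem measurableSet_Icc fun t ht => ?_
    simp only [Pi.mul_apply]
    rw [Real.norm_eq_abs, abs_of_nonneg (mul_nonneg hC2 (Real.exp_pos _).le)]
    exact mul_le_mul_of_nonneg_left (Real.exp_le_exp.mpr
      (mul_le_mul_of_nonneg_left ht.2 hlam0.le)) hC2
  set r : ℝ := max (s - 1/lam) 0 with hrdef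
  have hr0 : 0 ≤ r := le_max_right _ _
  have hrs : r ≤ s := max_le (by linarith [le_of_lt (one_div_pos.mpr hlam0)]) hs0
  have hsr : s - r ≤ 1/lam := by
    have := le_max_left (s - 1/lam) 0; linarith
  -- split at s
  have hsplit1 : ∫ t in Icc (0:ℝ) T, φ t
      = (∫ t in Icc (0:ℝ) s, φ t) + ∫ t in Ioc s T, φ t := by
    rw [← Set.Icc_union_Ioc_eq_Icc hs0 hsT]
    exact setIntegral_union ((Set.Iic_disjoint_Ioc le_rfl).mono_left Set.Icc_subset_Iic_self)
      measurableSet_Ioc (hφint.mono_set (by rw [← Set.Icc_union_Ioc_eq_Icc hs0 hsT]; exact subset_union_left))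
      (hφint.mono_set (by rw [← Set.Icc_union_Ioc_eq_Icc hs0 hsT]; exact subset_union_right))
  have hzero : ∫ t in Ioc s T, φ t = 0 := by
    rw [setIntegral_congr_fun measurableSet_Ioc (g := fun _ => (0:ℝ))
      (fun t ht => by
        have : s - t < 0 := by linarith [ht.1]
        simp only [hφdef]
        rw [← aux_inv_sqrt, Real.sqrt_eq_zero'.mpr this.le, inv_zero, mul_zero])]
    simp
  -- split at r
  have hsub1 : Icc (0:ℝ) r ⊆ Icc 0 s := Icc_subset_Icc le_rfl hrs
  have hsub2 : Ioc r s ⊆ Icc 0 s := Ioc_subset_Icc_self.trans (Icc_subset_Icc hr0 le_rfl)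
  have hsplit2 : ∫ t in Icc (0:ℝ) s, φ t
      = (∫ t in Icc (0:ℝ) r, φ t) + ∫ t in Ioc r s, φ t := by
    rw [← Set.Icc_union_Ioc_eq_Icc hr0 hrs]
    exact setIntegral_union ((Set.Iic_disjoint_Ioc le_rfl).mono_left Set.Icc_subset_Iic_self)
      measurableSet_Ioc (hφint.mono_set (hsub1.trans (Icc_subset_Icc le_rfl hsT)))
      (hφint.mono_set (hsub2.trans (Icc_subset_Icc le_rfl hsT)))
  -- piece 2
  have hp2 : ∫ t in Ioc r s, φ t ≤ C2 * Real.exp (lam * s) * (2 * (Real.sqrt lam)⁻¹) := by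
    have step1 : ∫ t in Ioc r s, φ t
        ≤ ∫ t in Ioc r s, (C2 * Real.exp (lam * s)) * (s - t) ^ (-(1/2) : ℝ) := by
      apply setIntegral_mono_on (hφint.mono_set (hsub2.trans (Icc_subset_Icc le_rfl hsT)))
        ((aux_kern_intble' s r s).const_mul _) measurableSet_Ioc
      intro t ht
      exact mul_le_mul_of_nonneg_right (mul_le_mul_of_nonneg_left
        (Real.exp_le_exp.mpr (mul_le_mul_of_nonneg_left ht.2 hlam0.le)) hC2)
        (aux_kern_nonneg _)
    rw [integral_const_mul, aux_kern_int' r s hrs] at step1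
    refine step1.trans ?_
    have h1 : Real.sqrt (s - r) ≤ (Real.sqrt lam)⁻¹ := by
      rw [← Real.sqrt_inv, ← one_div]
      exact Real.sqrt_le_sqrt hsr
    have : (2:ℝ) * Real.sqrt (s - r) ≤ 2 * (Real.sqrt lam)⁻¹ := by linarith
    exact mul_le_mul_of_nonneg_left this (by positivity)
  -- piece 1
  have hp1 : ∫ t in Icc (0:ℝ) r, φ t ≤ C2 * Real.exp (lam * s) * (Real.sqrt lam)⁻¹ := by
    rcases le_or_gt (s - 1/lam) 0 with hc | hc
    · have hr00 : r = 0 := max_eq_right hc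
      have : volume.restrict (Icc (0:ℝ) r) = 0 := by
        rw [Measure.restrict_eq_zero, hr00, Real.volume_Icc]; simp
      rw [show (∫ t in Icc (0:ℝ) r, φ t) = ∫ t, φ t ∂(volume.restrict (Icc (0:ℝ) r)) from rfl,
        this, integral_zero_measure]
      positivity
    · have hrr : r = s - 1/lam := max_eq_left hc.le
      have step1 : ∫ t in Icc (0:ℝ) r, φ t
          ≤ ∫ t in Icc (0:ℝ) r, (C2 * Real.sqrt lam) * Real.exp (lam * t) := by
        apply setIntegral_mono_on (hφint.mono_set (Icc_subset_Icc le_rfl (hrs.trans hsT)))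
        · apply Integrable.const_mul
          apply Measure.integrableOn_of_bounded (M := Real.exp (lam * r))
            (by simp [Real.volume_Icc]) ((measurable_const_mul lam).exp).aestronglyMeasurable
          refine ae_restrict_of_forall_mem measurableSet_Icc fun t ht => ?_
          rw [Real.norm_eq_abs, abs_of_nonneg (Real.exp_pos _).le]
          exact Real.exp_le_exp.mpr (mul_le_mul_of_nonneg_left ht.2 hlam0.le)
        · exact measurableSet_Icc
        · intro t ht
          have h1t : 1/lam ≤ s - t := by rw [hrr] at ht; linarith [ht.2]
          have hkb : (s - t) ^ (-(1/2) : ℝ) ≤ Real.sqrt lam := by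
            rw [← aux_inv_sqrt]
            have h2 : (Real.sqrt lam)⁻¹ ≤ Real.sqrt (s - t) := by
              rw [← Real.sqrt_inv, ← one_div]
              exact Real.sqrt_le_sqrt h1t
            calc (Real.sqrt (s - t))⁻¹ ≤ ((Real.sqrt lam)⁻¹)⁻¹ :=
                  inv_anti₀ (by positivity) h2
              _ = Real.sqrt lam := inv_inv _
          calc C2 * Real.exp (lam * t) * (s - t) ^ (-(1/2) : ℝ)
              ≤ C2 * Real.exp (lam * t) * Real.sqrt lam :=
                mul_le_mul_of_nonneg_left hkb (by positivity)
            _ = (C2 * Real.sqrt lam) * Real.exp (lam * t) := by ring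
      refine step1.trans ?_
      rw [integral_const_mul]
      have hint : ∫ t in Icc (0:ℝ) r, Real.exp (lam * t) = lam⁻¹ * (Real.exp (lam * r) - 1) := by
        rw [integral_Icc_eq_integral_Ioc, ← intervalIntegral.integral_of_le hr0,
          intervalIntegral.integral_comp_mul_left Real.exp (ne_of_gt hlam0), mul_zero,
          integral_exp, Real.exp_zero, smul_eq_mul]
      rw [hint]
      have key : Real.sqrt lam * lam⁻¹ = (Real.sqrt lam)⁻¹ := by
        have h9 : lam⁻¹ = (Real.sqrt lam)⁻¹ * (Real.sqrt lam)⁻¹ := by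
          rw [← mul_inv, Real.mul_self_sqrt hlam0.le]
        rw [h9, ← mul_assoc, mul_inv_cancel₀ (ne_of_gt hsql), one_mul]
      have hexp : Real.exp (lam * r) - 1 ≤ Real.exp (lam * s) := by
        have := Real.exp_le_exp.mpr (mul_le_mul_of_nonneg_left hrs hlam0.le)
        linarith
      calc C2 * Real.sqrt lam * (lam⁻¹ * (Real.exp (lam * r) - 1))
          = C2 * (Real.sqrt lam * lam⁻¹) * (Real.exp (lam * r) - 1) := by ring
        _ = C2 * (Real.sqrt lam)⁻¹ * (Real.exp (lam * r) - 1) := by rw [key]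
        _ ≤ C2 * (Real.sqrt lam)⁻¹ * Real.exp (lam * s) := by
            apply mul_le_mul_of_nonneg_left hexp (by positivity)
        _ = C2 * Real.exp (lam * s) * (Real.sqrt lam)⁻¹ := by ring
  -- combine
  have h6 : 6 * C2 ≤ Real.sqrt lam := by
    have : Real.sqrt (36 * C2 ^ 2) ≤ Real.sqrt lam := Real.sqrt_le_sqrt hlam2
    rwa [show (36:ℝ) * C2 ^ 2 = (6 * C2)^2 by ring, Real.sqrt_sq (by positivity)] at this
  have hfin : C2 * (Real.sqrt lam)⁻¹ * 3 ≤ 1/2 := by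
    have h1 : (Real.sqrt lam - 6 * C2) * (Real.sqrt lam)⁻¹ ≥ 0 :=
      mul_nonneg (by linarith) (by positivity)
    have h2 : Real.sqrt lam * (Real.sqrt lam)⁻¹ = 1 := mul_inv_cancel₀ (ne_of_gt hsql)
    nlinarith
  calc ∫ t in Icc (0:ℝ) T, φ t
      = (∫ t in Icc (0:ℝ) r, φ t) + (∫ t in Ioc r s, φ t) + 0 := by
        rw [hsplit1, hsplit2, hzero]
    _ ≤ C2 * Real.exp (lam * s) * (Real.sqrt lam)⁻¹
        + C2 * Real.exp (lam * s) * (2 * (Real.sqrt lam)⁻¹) + 0 := by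
        exact add_le_add (add_le_add hp1 hp2) le_rfl
    _ = Real.exp (lam * s) * (C2 * (Real.sqrt lam)⁻¹ * 3) := by ring
    _ ≤ Real.exp (lam * s) * (1/2) :=
        mul_le_mul_of_nonneg_left hfin (Real.exp_pos _).le

lemma aux_P (T C2 : ℝ) (hT : 0 < T) (hC2 : 0 < C2) (g2 : ℝ → ℝ) (hg2m : Measurable g2)
    (hg2nn : ∀ s ∈ Icc (0:ℝ) T, 0 ≤ g2 s) (M : ℝ) (hM : ∀ s ∈ Icc (0:ℝ) T, g2 s ≤ M)
    (t : ℝ) (ht : t ∈ Icc (0:ℝ) T) (S : ℝ) (hS : ∀ s ∈ Icc (0:ℝ) T, g2 s ≤ S) (hS0 : 0 ≤ S) :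
    C2 * ∫ s in Ioc t T, g2 s * (s - t) ^ (-(1/2) : ℝ)
      ≤ 2 * C2 ^ 2 * (∫ s in Icc (0:ℝ) T, g2 s) + (1/2) * S := by
  set δ : ℝ := ((2*C2)⁻¹)^2 with hδdef
  have hδ0 : 0 < δ := by positivity
  have hsqδ : Real.sqrt δ = (2*C2)⁻¹ := Real.sqrt_sq (by positivity)
  set m : ℝ := min (t + δ) T with hmdef
  have htm : t ≤ m := le_min (by linarith) ht.2
  have hmT : m ≤ T := min_le_right _ _
  have hmtδ : m - t ≤ δ := by
    have : m ≤ t + δ := min_le_left _ _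
    linarith
  have hsubIcc : Ioc t T ⊆ Icc (0:ℝ) T := fun s hs => ⟨ht.1.trans hs.1.le, hs.2⟩
  set ρ : ℝ → ℝ := (Ioc t m).indicator (fun s => (s - t) ^ (-(1/2) : ℝ) - 2*C2) with hρdef
  -- integrability
  have hIg2T : IntegrableOn g2 (Icc (0:ℝ) T) := by
    apply Measure.integrableOn_of_bounded (M := M) (by simp [Real.volume_Icc])
      hg2m.aestronglyMeasurable
    refine ae_restrict_of_forall_mem measurableSet_Icc fun s hs => ?_
    rw [Real.norm_eq_abs, abs_of_nonneg (hg2nn s hs)]; exact hM s hs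
  have hIg2 : IntegrableOn g2 (Ioc t T) := hIg2T.mono_set hsubIcc
  have hker : IntegrableOn (fun s => (s - t) ^ (-(1/2) : ℝ)) (Ioc t T) := aux_kern_intble t t T
  have hprod : IntegrableOn (fun s => g2 s * (s - t) ^ (-(1/2) : ℝ)) (Ioc t T) := by
    apply Integrable.bdd_mul (c := M) hker hg2m.aestronglyMeasurable
    refine ae_restrict_of_forall_mem measurableSet_Ioc fun s hs => ?_
    rw [Real.norm_eq_abs, abs_of_nonneg (hg2nn s (hsubIcc hs))]
    exact hM s (hsubIcc hs)
  have hconst : IntegrableOn (fun _ : ℝ => 2*C2) (Ioc t m) := by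
    refine (integrableOn_const_iff (C := 2*C2)).mpr (Or.inr ?_)
    rw [Real.volume_Ioc]; exact ENNReal.ofReal_lt_top
  have hρint : IntegrableOn ρ (Ioc t T) := by
    have h1 : IntegrableOn (fun s => (s - t) ^ (-(1/2) : ℝ) - 2*C2) (Ioc t m) :=
      (aux_kern_intble t t m).sub hconst
    exact (h1.integrable_indicator measurableSet_Ioc).integrableOn
  -- pointwise bound
  have hpt : ∀ s ∈ Ioc t T, g2 s * (s - t) ^ (-(1/2) : ℝ) ≤ 2*C2*g2 s + S * ρ s := by
    intro s hs
    have hs0T : s ∈ Icc (0:ℝ) T := hsubIcc hs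
    have hg2s := hg2nn s hs0T
    have hg2S := hS s hs0T
    have hst : 0 < s - t := by linarith [hs.1]
    by_cases hsm : s ≤ m
    · have hmem : s ∈ Ioc t m := ⟨hs.1, hsm⟩
      rw [hρdef, indicator_of_mem hmem]
      have hκ : 2*C2 ≤ (s - t) ^ (-(1/2) : ℝ) := by
        rw [← aux_inv_sqrt]
        have h1 : Real.sqrt (s - t) ≤ (2*C2)⁻¹ := by
          rw [← hsqδ]; exact Real.sqrt_le_sqrt (by linarith)
        calc 2*C2 = ((2*C2)⁻¹)⁻¹ := (inv_inv _).symm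
          _ ≤ (Real.sqrt (s - t))⁻¹ := inv_anti₀ (Real.sqrt_pos.mpr hst) h1
      nlinarith [mul_nonneg (sub_nonneg.mpr hg2S) (sub_nonneg.mpr hκ)]
    · have hnot : s ∉ Ioc t m := fun h => hsm h.2
      rw [hρdef, indicator_of_notMem hnot, mul_zero, add_zero]
      have h7 : t + δ < s := by
        rcases le_total (t + δ) T with h | h
        · have : m = t + δ := min_eq_left h
          rw [this] at hsm; push_neg at hsm; exact hsm
        · have : m = T := min_eq_right h
          exact absurd (hs.2.trans this.ge) hsm
      have hκ2 : (s - t) ^ (-(1/2) : ℝ) ≤ 2*C2 := by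
        rw [← aux_inv_sqrt]
        have h1 : (2*C2)⁻¹ ≤ Real.sqrt (s - t) := by
          rw [← hsqδ]; exact Real.sqrt_le_sqrt (by linarith)
        calc (Real.sqrt (s - t))⁻¹ ≤ ((2*C2)⁻¹)⁻¹ := inv_anti₀ (by positivity) h1
          _ = 2*C2 := inv_inv _
      nlinarith [mul_le_mul_of_nonneg_left hκ2 hg2s]
  -- integrate
  have hmono : ∫ s in Ioc t T, g2 s * (s - t) ^ (-(1/2) : ℝ)
      ≤ ∫ s in Ioc t T, (2*C2*g2 s + S * ρ s) := by
    exact setIntegral_mono_on hprod ((hIg2.const_mul _).add (hρint.const_mul _))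
      measurableSet_Ioc hpt
  have hadd : ∫ s in Ioc t T, (2*C2*g2 s + S * ρ s)
      = 2*C2 * (∫ s in Ioc t T, g2 s) + S * ∫ s in Ioc t T, ρ s := by
    rw [integral_add (hIg2.const_mul _) (hρint.const_mul _), integral_const_mul,
      integral_const_mul]
  have hρval : ∫ s in Ioc t T, ρ s ≤ (2*C2)⁻¹ := by
    rw [hρdef, setIntegral_indicator measurableSet_Ioc,
      inter_eq_self_of_subset_right (Ioc_subset_Ioc_right hmT),
      integral_sub (aux_kern_intble t t m) hconst, aux_kern_int t m htm,
      setIntegral_const, Real.volume_real_Ioc_of_le htm, smul_eq_mul]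
    set x : ℝ := Real.sqrt (m - t) with hx
    have hx0 : 0 ≤ x := Real.sqrt_nonneg _
    have hx2 : x^2 = m - t := Real.sq_sqrt (by linarith)
    rw [inv_eq_one_div, le_div_iff₀ (by positivity : (0:ℝ) < 2*C2), ← hx2]
    nlinarith [sq_nonneg (2*C2*x - 1)]
  have hIoc_le : ∫ s in Ioc t T, g2 s ≤ ∫ s in Icc (0:ℝ) T, g2 s := by
    apply setIntegral_mono_set hIg2T
    · exact ae_restrict_of_forall_mem measurableSet_Icc hg2nn
    · exact hsubIcc.eventuallyLE
  have hI0 : 0 ≤ ∫ s in Ioc t T, g2 s :=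
    setIntegral_nonneg measurableSet_Ioc fun s hs => hg2nn s (hsubIcc hs)
  have hhalf : C2 * (2*C2)⁻¹ = 1/2 := by field_simp
  calc C2 * ∫ s in Ioc t T, g2 s * (s - t) ^ (-(1/2) : ℝ)
      ≤ C2 * ∫ s in Ioc t T, (2*C2*g2 s + S * ρ s) :=
        mul_le_mul_of_nonneg_left hmono hC2.le
    _ = C2 * (2*C2 * (∫ s in Ioc t T, g2 s) + S * ∫ s in Ioc t T, ρ s) := by rw [hadd]
    _ ≤ C2 * (2*C2 * (∫ s in Icc (0:ℝ) T, g2 s) + S * (2*C2)⁻¹) := by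
        apply mul_le_mul_of_nonneg_left _ hC2.le
        exact add_le_add (mul_le_mul_of_nonneg_left hIoc_le (by positivity))
          (mul_le_mul_of_nonneg_left hρval hS0)
    _ = 2 * C2 ^ 2 * (∫ s in Icc (0:ℝ) T, g2 s) + (C2 * (2*C2)⁻¹) * S := by ring
    _ = 2 * C2 ^ 2 * (∫ s in Icc (0:ℝ) T, g2 s) + (1/2) * S := by rw [hhalf]

lemma aux_bdd_intOn (T : ℝ) (g : ℝ → ℝ) (hm : Measurable g) (M : ℝ)
    (hb : ∀ s ∈ Icc (0:ℝ) T, |g s| ≤ M) : IntegrableOn g (Icc (0:ℝ) T) := by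
  apply Measure.integrableOn_of_bounded (M := M) (by simp [Real.volume_Icc])
    hm.aestronglyMeasurable
  exact ae_restrict_of_forall_mem measurableSet_Icc fun s hs => hb s hs

lemma aux_phi_int (T C2 lam s : ℝ) (hC2 : 0 ≤ C2) (hlam0 : 0 < lam) :
    IntegrableOn (fun t => C2 * Real.exp (lam * t) * (s - t) ^ (-(1/2) : ℝ))
      (Icc (0:ℝ) T) := by
  have hker : IntegrableOn (fun t => (s - t) ^ (-(1/2) : ℝ)) (Icc 0 T) := by
    rw [integrableOn_Icc_iff_integrableOn_Ioc]; exact aux_kern_intble' s 0 T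
  apply Integrable.bdd_mul (c := C2 * Real.exp (lam * T)) hker
    ((measurable_const.mul ((measurable_const_mul lam).exp)).aestronglyMeasurable)
  refine ae_restrict_of_forall_mem measurableSet_Icc fun t ht => ?_
  simp only [Pi.mul_apply]
  rw [Real.norm_eq_abs, abs_of_nonneg (mul_nonneg hC2 (Real.exp_pos _).le)]
  exact mul_le_mul_of_nonneg_left (Real.exp_le_exp.mpr
    (mul_le_mul_of_nonneg_left ht.2 hlam0.le)) hC2

lemma aux_I (T C2 lam : ℝ) (hT : 0 < T) (hC2 : 0 ≤ C2) (hlam1 : 1 ≤ lam)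
    (hlam2 : 36 * C2 ^ 2 ≤ lam)
    (g1 g2 : ℝ → ℝ) (C1 : ℝ) (hC1 : 0 ≤ C1)
    (hg1m : Measurable g1) (hg2m : Measurable g2)
    (hg1nn : ∀ t ∈ Icc (0:ℝ) T, 0 ≤ g1 t) (hg2nn : ∀ t ∈ Icc (0:ℝ) T, 0 ≤ g2 t)
    (M2 : ℝ) (hM2 : ∀ t ∈ Icc (0:ℝ) T, g2 t ≤ M2)
    (hyp : ∀ t ∈ Icc (0:ℝ) T,
      g1 t ≤ C1 + C2 * ∫ s in Ioc t T, g2 s * (s - t) ^ (-(1/2) : ℝ)) :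
    (∫ t in Icc (0:ℝ) T, g1 t * Real.exp (lam * t))
      ≤ (T * Real.exp (lam * T)) * C1
        + (1/2) * ∫ t in Icc (0:ℝ) T, g2 t * Real.exp (lam * t) := by
  have hlam0 : (0:ℝ) < lam := by linarith
  have hM20 : 0 ≤ M2 := le_trans (hg2nn 0 ⟨le_rfl, hT.le⟩) (hM2 0 ⟨le_rfl, hT.le⟩)
  have hsubIcc : ∀ t, t ∈ Icc (0:ℝ) T → Ioc t T ⊆ Icc (0:ℝ) T :=
    fun t ht s hs => ⟨ht.1.trans hs.1.le, hs.2⟩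
  have hIg2T : IntegrableOn g2 (Icc (0:ℝ) T) :=
    aux_bdd_intOn T g2 hg2m M2 (fun s hs => by
      rw [abs_of_nonneg (hg2nn s hs)]; exact hM2 s hs)
  set F : ℝ → ℝ → ℝ≥0∞ := fun t s =>
    ENNReal.ofReal (C2 * Real.exp (lam * t) * (g2 s * (s - t) ^ (-(1/2) : ℝ))) with hFdef
  have hFm : Measurable (Function.uncurry F) := by
    apply ENNReal.measurable_ofReal.comp
    fun_prop
  -- pointwise domination
  have key : ∀ t ∈ Icc (0:ℝ) T,
      ENNReal.ofReal (g1 t * Real.exp (lam * t))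
        ≤ ENNReal.ofReal (C1 * Real.exp (lam * t)) + ∫⁻ s in Icc (0:ℝ) T, F t s := by
    intro t ht
    set J := ∫ s in Ioc t T, g2 s * (s - t) ^ (-(1/2) : ℝ) with hJdef
    have hJ0 : 0 ≤ J := setIntegral_nonneg measurableSet_Ioc fun s hs =>
      mul_nonneg (hg2nn s (hsubIcc t ht hs)) (aux_kern_nonneg _)
    have hint : IntegrableOn (fun s => g2 s * (s - t) ^ (-(1/2) : ℝ)) (Ioc t T) := by
      apply Integrable.bdd_mul (c := M2) (aux_kern_intble t t T) hg2m.aestronglyMeasurable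
      refine ae_restrict_of_forall_mem measurableSet_Ioc fun s hs => ?_
      rw [Real.norm_eq_abs, abs_of_nonneg (hg2nn s (hsubIcc t ht hs))]
      exact hM2 s (hsubIcc t ht hs)
    have h1 : ENNReal.ofReal (C2 * Real.exp (lam * t) * J)
        ≤ ∫⁻ s in Icc (0:ℝ) T, F t s := by
      rw [ENNReal.ofReal_mul (by positivity),
        ofReal_integral_eq_lintegral_ofReal hint
          (ae_restrict_of_forall_mem measurableSet_Ioc fun s hs =>
            mul_nonneg (hg2nn s (hsubIcc t ht hs)) (aux_kern_nonneg _)),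
        ← lintegral_const_mul' _ _ ENNReal.ofReal_ne_top]
      have : ∀ s : ℝ, ENNReal.ofReal (C2 * Real.exp (lam * t))
          * ENNReal.ofReal (g2 s * (s - t) ^ (-(1/2) : ℝ)) = F t s := fun s => by
        rw [hFdef, ← ENNReal.ofReal_mul (by positivity)]
      simp_rw [this]
      exact lintegral_mono_set (hsubIcc t ht)
    calc ENNReal.ofReal (g1 t * Real.exp (lam * t))
        ≤ ENNReal.ofReal ((C1 + C2 * J) * Real.exp (lam * t)) :=
          ENNReal.ofReal_le_ofReal
            (mul_le_mul_of_nonneg_right (hyp t ht) (Real.exp_pos _).le)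
      _ = ENNReal.ofReal (C1 * Real.exp (lam * t))
            + ENNReal.ofReal (C2 * Real.exp (lam * t) * J) := by
          rw [show (C1 + C2 * J) * Real.exp (lam * t)
              = C1 * Real.exp (lam * t) + C2 * Real.exp (lam * t) * J from by ring,
            ENNReal.ofReal_add (by positivity) (by positivity)]
      _ ≤ _ := add_le_add_right h1 _
  -- integrate the domination
  have hmeas_rhs : Measurable fun t => ENNReal.ofReal (C1 * Real.exp (lam * t))
      + ∫⁻ s in Icc (0:ℝ) T, F t s := by
    apply Measurable.add (f := fun t => ENNReal.ofReal (C1 * Real.exp (lam * t)))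
      (g := fun t => ∫⁻ s in Icc (0:ℝ) T, F t s)
    · apply ENNReal.measurable_ofReal.comp; fun_prop
    · exact Measurable.lintegral_prod_right hFm
  have step1 : ∫⁻ t in Icc (0:ℝ) T, ENNReal.ofReal (g1 t * Real.exp (lam * t))
      ≤ ∫⁻ t in Icc (0:ℝ) T, (ENNReal.ofReal (C1 * Real.exp (lam * t))
          + ∫⁻ s in Icc (0:ℝ) T, F t s) :=
    setLIntegral_mono hmeas_rhs key
  have step2 : ∫⁻ t in Icc (0:ℝ) T, (ENNReal.ofReal (C1 * Real.exp (lam * t))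
          + ∫⁻ s in Icc (0:ℝ) T, F t s)
      = (∫⁻ t in Icc (0:ℝ) T, ENNReal.ofReal (C1 * Real.exp (lam * t)))
        + ∫⁻ t in Icc (0:ℝ) T, ∫⁻ s in Icc (0:ℝ) T, F t s :=
    lintegral_add_left (by apply ENNReal.measurable_ofReal.comp; fun_prop) _
  -- first term
  have hterm1 : ∫⁻ t in Icc (0:ℝ) T, ENNReal.ofReal (C1 * Real.exp (lam * t))
      ≤ ENNReal.ofReal (C1 * Real.exp (lam * T) * T) := by
    calc ∫⁻ t in Icc (0:ℝ) T, ENNReal.ofReal (C1 * Real.exp (lam * t))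
        ≤ ∫⁻ _ in Icc (0:ℝ) T, ENNReal.ofReal (C1 * Real.exp (lam * T)) :=
          setLIntegral_mono measurable_const fun t ht =>
            ENNReal.ofReal_le_ofReal (mul_le_mul_of_nonneg_left
              (Real.exp_le_exp.mpr (mul_le_mul_of_nonneg_left ht.2 hlam0.le)) hC1)
      _ = ENNReal.ofReal (C1 * Real.exp (lam * T)) * ENNReal.ofReal T := by
          rw [setLIntegral_const, Real.volume_Icc, sub_zero]
      _ = ENNReal.ofReal (C1 * Real.exp (lam * T) * T) := by
          rw [← ENNReal.ofReal_mul (by positivity)]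
  -- second term : swap and bound
  have hterm2 : ∫⁻ t in Icc (0:ℝ) T, ∫⁻ s in Icc (0:ℝ) T, F t s
      ≤ ENNReal.ofReal (∫ s in Icc (0:ℝ) T, g2 s * Real.exp (lam * s) * (1/2)) := by
    rw [lintegral_lintegral_swap (hFm.aemeasurable)]
    have inner : ∀ s ∈ Icc (0:ℝ) T, ∫⁻ t in Icc (0:ℝ) T, F t s
        ≤ ENNReal.ofReal (g2 s * Real.exp (lam * s) * (1/2)) := by
      intro s hs
      have hrw : ∀ t : ℝ, F t s = ENNReal.ofReal (g2 s)
          * ENNReal.ofReal (C2 * Real.exp (lam * t) * (s - t) ^ (-(1/2) : ℝ)) := by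
        intro t
        rw [hFdef, ← ENNReal.ofReal_mul (hg2nn s hs)]
        congr 1
        ring
      calc ∫⁻ t in Icc (0:ℝ) T, F t s
          = ENNReal.ofReal (g2 s) * ∫⁻ t in Icc (0:ℝ) T,
              ENNReal.ofReal (C2 * Real.exp (lam * t) * (s - t) ^ (-(1/2) : ℝ)) := by
            simp_rw [hrw]
            exact lintegral_const_mul' _ _ ENNReal.ofReal_ne_top
        _ = ENNReal.ofReal (g2 s) * ENNReal.ofReal
              (∫ t in Icc (0:ℝ) T, C2 * Real.exp (lam * t) * (s - t) ^ (-(1/2) : ℝ)) := by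
            rw [ofReal_integral_eq_lintegral_ofReal (aux_phi_int T C2 lam s hC2 hlam0)
              (ae_restrict_of_forall_mem measurableSet_Icc fun t _ =>
                mul_nonneg (by positivity) (aux_kern_nonneg _))]
        _ ≤ ENNReal.ofReal (g2 s) * ENNReal.ofReal (Real.exp (lam * s) * (1/2)) := by
            exact mul_le_mul_right (ENNReal.ofReal_le_ofReal
              (aux_K T C2 lam s hT hC2 hlam1 hlam2 hs.1 hs.2)) _
        _ = ENNReal.ofReal (g2 s * Real.exp (lam * s) * (1/2)) := by
            rw [← ENNReal.ofReal_mul (hg2nn s hs), mul_assoc]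
    calc ∫⁻ s in Icc (0:ℝ) T, ∫⁻ t in Icc (0:ℝ) T, F t s
        ≤ ∫⁻ s in Icc (0:ℝ) T, ENNReal.ofReal (g2 s * Real.exp (lam * s) * (1/2)) :=
          setLIntegral_mono (by apply ENNReal.measurable_ofReal.comp; fun_prop) inner
      _ = ENNReal.ofReal (∫ s in Icc (0:ℝ) T, g2 s * Real.exp (lam * s) * (1/2)) := by
          have hInt2 : IntegrableOn (fun s => g2 s * Real.exp (lam * s) * (1/2))
              (Icc (0:ℝ) T) := by
            apply aux_bdd_intOn T _ (by fun_prop) (M2 * Real.exp (lam * T) * (1/2))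
            intro s hs
            rw [abs_of_nonneg (mul_nonneg (mul_nonneg (hg2nn s hs)
              (Real.exp_pos _).le) (by norm_num))]
            have h1 : g2 s * Real.exp (lam * s) ≤ M2 * Real.exp (lam * T) :=
              mul_le_mul (hM2 s hs) (Real.exp_le_exp.mpr
                (mul_le_mul_of_nonneg_left hs.2 hlam0.le)) (Real.exp_pos _).le hM20
            linarith
          rw [ofReal_integral_eq_lintegral_ofReal hInt2
            (ae_restrict_of_forall_mem measurableSet_Icc fun s hs =>
              mul_nonneg (mul_nonneg (hg2nn s hs) (Real.exp_pos _).le) (by norm_num))]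
  -- assemble
  have hB0 : 0 ≤ ∫ s in Icc (0:ℝ) T, g2 s * Real.exp (lam * s) * (1/2) :=
    setIntegral_nonneg measurableSet_Icc fun s hs =>
      mul_nonneg (mul_nonneg (hg2nn s hs) (Real.exp_pos _).le) (by norm_num)
  have hfinal : ∫⁻ t in Icc (0:ℝ) T, ENNReal.ofReal (g1 t * Real.exp (lam * t))
      ≤ ENNReal.ofReal (C1 * Real.exp (lam * T) * T
          + ∫ s in Icc (0:ℝ) T, g2 s * Real.exp (lam * s) * (1/2)) := by
    calc ∫⁻ t in Icc (0:ℝ) T, ENNReal.ofReal (g1 t * Real.exp (lam * t))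
        ≤ _ := step1
      _ = _ := step2
      _ ≤ ENNReal.ofReal (C1 * Real.exp (lam * T) * T)
          + ENNReal.ofReal (∫ s in Icc (0:ℝ) T, g2 s * Real.exp (lam * s) * (1/2)) :=
          add_le_add hterm1 hterm2
      _ = _ := (ENNReal.ofReal_add (by positivity) hB0).symm
  have hL : ∫ t in Icc (0:ℝ) T, g1 t * Real.exp (lam * t)
      = (∫⁻ t in Icc (0:ℝ) T, ENNReal.ofReal (g1 t * Real.exp (lam * t))).toReal := by
    rw [integral_eq_lintegral_of_nonneg_ae
      (ae_restrict_of_forall_mem measurableSet_Icc fun t ht =>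
        mul_nonneg (hg1nn t ht) (Real.exp_pos _).le)
      ((hg1m.mul (by fun_prop : Measurable fun t => Real.exp (lam * t))).aestronglyMeasurable)]
  rw [hL]
  have hmain := ENNReal.toReal_le_of_le_ofReal (add_nonneg (by positivity) hB0) hfinal
  refine hmain.trans ?_
  have heq : ∫ s in Icc (0:ℝ) T, g2 s * Real.exp (lam * s) * (1/2)
      = (1/2) * ∫ s in Icc (0:ℝ) T, g2 s * Real.exp (lam * s) := by
    rw [integral_mul_const]; ring
  linarith [heq]


/-- A Gronwall-type lemma with a square-root singular kernel: if
`g₁(t) ≤ C₁ + C₂ ∫_t^T g₂(s)/√(s−t) ds` on `[0,T]` for bounded measurable nonnegative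
`g₁, g₂`, then there are `λ, μ > 0` depending only on `C₂` and `T` with
`∫_0^T g₁ e^{λt} ≤ μ C₁ + ½ ∫_0^T g₂ e^{λt}` and
`sup g₁ ≤ μ C₁ + 2C₂² ∫_0^T g₂ + ½ sup g₂`; if moreover `g₁ = g₂`, then `g₁ ≤ μ' C₁`
on `[0,T]` for a constant `μ'` depending only on `C₂` and `T`. -/
theorem stmt1 (T : ℝ) (hT : 0 < T) (C2 : ℝ) (hC2 : 0 ≤ C2) :
    (∃ lam mu : ℝ, 0 < lam ∧ 0 < mu ∧
      ∀ (g1 g2 : ℝ → ℝ) (C1 : ℝ), 0 ≤ C1 →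
        Measurable g1 → Measurable g2 →
        (∀ t ∈ Icc (0:ℝ) T, 0 ≤ g1 t) → (∀ t ∈ Icc (0:ℝ) T, 0 ≤ g2 t) →
        (∃ M, ∀ t ∈ Icc (0:ℝ) T, g1 t ≤ M) → (∃ M, ∀ t ∈ Icc (0:ℝ) T, g2 t ≤ M) →
        (∀ t ∈ Icc (0:ℝ) T,
          g1 t ≤ C1 + C2 * ∫ s in Ioc t T, g2 s / Real.sqrt (s - t)) →
        ((∫ t in Icc (0:ℝ) T, g1 t * Real.exp (lam * t))
            ≤ mu * C1 + (1/2) * ∫ t in Icc (0:ℝ) T, g2 t * Real.exp (lam * t)) ∧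
        (∀ t ∈ Icc (0:ℝ) T,
          g1 t ≤ mu * C1 + 2 * C2 ^ 2 * (∫ s in Icc (0:ℝ) T, g2 s)
              + (1/2) * ⨆ s : Icc (0:ℝ) T, g2 s)) ∧
    (∃ mu' : ℝ, 0 < mu' ∧
      ∀ (g1 : ℝ → ℝ) (C1 : ℝ), 0 ≤ C1 →
        Measurable g1 →
        (∀ t ∈ Icc (0:ℝ) T, 0 ≤ g1 t) →
        (∃ M, ∀ t ∈ Icc (0:ℝ) T, g1 t ≤ M) →
        (∀ t ∈ Icc (0:ℝ) T,
          g1 t ≤ C1 + C2 * ∫ s in Ioc t T, g1 s / Real.sqrt (s - t)) →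
        ∀ t ∈ Icc (0:ℝ) T, g1 t ≤ mu' * C1) := by
  obtain ⟨lam, hlamdef⟩ : ∃ lam : ℝ, lam = 36 * C2 ^ 2 + 1 := ⟨_, rfl⟩
  have hlam1 : 1 ≤ lam := by rw [hlamdef]; nlinarith [sq_nonneg C2]
  have hlam2 : 36 * C2 ^ 2 ≤ lam := by rw [hlamdef]; linarith
  have hlam0 : (0:ℝ) < lam := by linarith
  obtain ⟨mu, hmudef⟩ : ∃ mu : ℝ, mu = T * Real.exp (lam * T) + 1 := ⟨_, rfl⟩
  have hmu1 : 1 ≤ mu := by rw [hmudef]; nlinarith [Real.exp_pos (lam * T)]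
  have hmu0 : (0:ℝ) < mu := by linarith
  have main : ∀ (g1 g2 : ℝ → ℝ) (C1 : ℝ), 0 ≤ C1 →
      Measurable g1 → Measurable g2 →
      (∀ t ∈ Icc (0:ℝ) T, 0 ≤ g1 t) → (∀ t ∈ Icc (0:ℝ) T, 0 ≤ g2 t) →
      (∃ M, ∀ t ∈ Icc (0:ℝ) T, g1 t ≤ M) → (∃ M, ∀ t ∈ Icc (0:ℝ) T, g2 t ≤ M) →
      (∀ t ∈ Icc (0:ℝ) T,
        g1 t ≤ C1 + C2 * ∫ s in Ioc t T, g2 s / Real.sqrt (s - t)) →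
      ((∫ t in Icc (0:ℝ) T, g1 t * Real.exp (lam * t))
          ≤ mu * C1 + (1/2) * ∫ t in Icc (0:ℝ) T, g2 t * Real.exp (lam * t)) ∧
      (∀ t ∈ Icc (0:ℝ) T,
        g1 t ≤ mu * C1 + 2 * C2 ^ 2 * (∫ s in Icc (0:ℝ) T, g2 s)
            + (1/2) * ⨆ s : Icc (0:ℝ) T, g2 s) := by
    intro g1 g2 C1 hC1 hg1m hg2m hg1nn hg2nn hbd1 hbd2 hyp
    obtain ⟨M2, hM2⟩ := hbd2
    have hyp' : ∀ t ∈ Icc (0:ℝ) T,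
        g1 t ≤ C1 + C2 * ∫ s in Ioc t T, g2 s * (s - t) ^ (-(1/2) : ℝ) := by
      intro t ht
      have h := hyp t ht
      simpa only [div_eq_mul_inv, aux_inv_sqrt] using h
    haveI hne : Nonempty (Icc (0:ℝ) T) := ⟨⟨0, le_rfl, hT.le⟩⟩
    have hbdd : BddAbove (range fun s : Icc (0:ℝ) T => g2 ↑s) :=
      ⟨M2, by rintro x ⟨i, rfl⟩; exact hM2 i i.2⟩
    have hSle : ∀ s ∈ Icc (0:ℝ) T, g2 s ≤ ⨆ s : Icc (0:ℝ) T, g2 ↑s :=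
      fun s hs => le_ciSup hbdd ⟨s, hs⟩
    have hS0 : 0 ≤ ⨆ s : Icc (0:ℝ) T, g2 ↑s :=
      le_trans (hg2nn 0 ⟨le_rfl, hT.le⟩) (hSle 0 ⟨le_rfl, hT.le⟩)
    have hI0 : 0 ≤ ∫ s in Icc (0:ℝ) T, g2 s :=
      setIntegral_nonneg measurableSet_Icc hg2nn
    constructor
    · have h := aux_I T C2 lam hT hC2 hlam1 hlam2 g1 g2 C1 hC1 hg1m hg2m
        hg1nn hg2nn M2 hM2 hyp'
      refine h.trans ?_
      have hTe : T * Real.exp (lam * T) * C1 ≤ mu * C1 :=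
        mul_le_mul_of_nonneg_right (by rw [hmudef]; linarith) hC1
      linarith
    · intro t ht
      rcases eq_or_lt_of_le hC2 with hC20 | hC20
      · have h := hyp t ht
        rw [← hC20, zero_mul, add_zero] at h
        have hmuC1 : C1 ≤ mu * C1 := le_mul_of_one_le_left hC1 hmu1
        rw [← hC20]
        have hz : 2 * (0:ℝ) ^ 2 * (∫ s in Icc (0:ℝ) T, g2 s) = 0 := by ring
        linarith
      · have hP := aux_P T C2 hT hC20 g2 hg2m hg2nn M2 hM2 t ht
          (⨆ s : Icc (0:ℝ) T, g2 ↑s) hSle hS0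
        have h := hyp' t ht
        have hmuC1 : C1 ≤ mu * C1 := le_mul_of_one_le_left hC1 hmu1
        linarith
  refine ⟨⟨lam, mu, hlam0, hmu0, main⟩, 2 * mu + 8 * C2 ^ 2 * mu, by positivity, ?_⟩
  intro g1 C1 hC1 hg1m hg1nn hbd1 hyp
  obtain ⟨M, hM⟩ := hbd1
  have hM0 : 0 ≤ M := le_trans (hg1nn 0 ⟨le_rfl, hT.le⟩) (hM 0 ⟨le_rfl, hT.le⟩)
  obtain ⟨h1, h2⟩ := main g1 g1 C1 hC1 hg1m hg1m hg1nn hg1nn ⟨M, hM⟩ ⟨M, hM⟩ hyp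
  have hX : (∫ t in Icc (0:ℝ) T, g1 t * Real.exp (lam * t)) ≤ 2 * (mu * C1) := by
    linarith
  have hIg1 : IntegrableOn g1 (Icc (0:ℝ) T) :=
    aux_bdd_intOn T g1 hg1m M (fun s hs => by
      rw [abs_of_nonneg (hg1nn s hs)]; exact hM s hs)
  have hIg1e : IntegrableOn (fun t => g1 t * Real.exp (lam * t)) (Icc (0:ℝ) T) := by
    apply aux_bdd_intOn T _ (by fun_prop) (M * Real.exp (lam * T))
    intro s hs
    rw [abs_of_nonneg (mul_nonneg (hg1nn s hs) (Real.exp_pos _).le)]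
    exact mul_le_mul (hM s hs) (Real.exp_le_exp.mpr
      (mul_le_mul_of_nonneg_left hs.2 hlam0.le)) (Real.exp_pos _).le hM0
  have hIle : (∫ t in Icc (0:ℝ) T, g1 t)
      ≤ ∫ t in Icc (0:ℝ) T, g1 t * Real.exp (lam * t) :=
    setIntegral_mono_on hIg1 hIg1e measurableSet_Icc (fun t ht =>
      le_mul_of_one_le_right (hg1nn t ht)
        (Real.one_le_exp (mul_nonneg hlam0.le ht.1)))
  haveI hne : Nonempty (Icc (0:ℝ) T) := ⟨⟨0, le_rfl, hT.le⟩⟩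
  have hbdd : BddAbove (range fun s : Icc (0:ℝ) T => g1 ↑s) :=
    ⟨M, by rintro x ⟨i, rfl⟩; exact hM i i.2⟩
  have hS : (⨆ s : Icc (0:ℝ) T, g1 ↑s)
      ≤ mu * C1 + 2 * C2 ^ 2 * (∫ s in Icc (0:ℝ) T, g1 s)
        + (1/2) * ⨆ s : Icc (0:ℝ) T, g1 ↑s :=
    ciSup_le fun i => h2 i i.2
  intro t ht
  have hg1S : g1 t ≤ ⨆ s : Icc (0:ℝ) T, g1 ↑s := le_ciSup hbdd ⟨t, ht⟩
  have hIX : (∫ s in Icc (0:ℝ) T, g1 s) ≤ 2 * (mu * C1) := le_trans hIle hX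
  have hc : 2 * C2 ^ 2 * (∫ s in Icc (0:ℝ) T, g1 s) ≤ 2 * C2 ^ 2 * (2 * (mu * C1)) :=
    mul_le_mul_of_nonneg_left hIX (by positivity)
  nlinarith [hS, hg1S, hc]

end GronwallAux
end
end

section
/- Let g₁, g₂ : [0,T] → [0,∞) be bounded measurable functions such that g₁(t) ≤ C₁/√(T−t) + C₂ ∫_t^T g₂(s)/√(s−t) ds for all t ∈ [0,T), for some constants C₁, C₂ ≥ 0. Then there exist constants λ, μ > 0, depending only on C₂ and T, such that ∫_0^T g₁(t) e^{λt} dt ≤ μ C₁ + (1/2) ∫_0^T g₂(t) e^{λt} dt, and sup_{0≤t≤T} [√(T−t) g₁(t)] ≤ μ C₁ + μ ∫_0^T g₂(t) dt + (1/2) sup_{0≤t≤T} [√(T−t) g₂(t)]. In particular, if g₁ = g₂, then sup_{0≤t≤T} [√(T−t) g₁(t)] ≤ μ′ C₁ for a constant μ′ depending only on C₂ and T. -/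
open MeasureTheory Set

noncomputable section

lemma inv_sqrt_eq (u : ℝ) : 1 / Real.sqrt u = u ^ (-(2⁻¹) : ℝ) := by
  rcases lt_trichotomy u 0 with h | h | h
  · rw [Real.sqrt_eq_zero_of_nonpos h.le, Real.rpow_def_of_neg h,
      show (-2⁻¹ * Real.pi) = -(Real.pi/2) by ring, Real.cos_neg, Real.cos_pi_div_two, mul_zero,
      div_zero]
  · simp [h]
  · rw [Real.rpow_neg h.le, Real.sqrt_eq_rpow, one_div]
    norm_num

lemma int_pow_neg_half (c : ℝ) (hc : 0 ≤ c) :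
    ∫ u in Ioc (0:ℝ) c, u ^ (-(2⁻¹) : ℝ) = 2 * Real.sqrt c := by
  rw [← intervalIntegral.integral_of_le hc, integral_rpow (by norm_num)]
  rw [Real.sqrt_eq_rpow]
  norm_num
  ring

lemma integrableOn_pow_neg_half (a b : ℝ) :
    IntegrableOn (fun u : ℝ => u ^ (-(2⁻¹) : ℝ)) (Ioc a b) := by
  rcases le_total a b with h | h
  · have := (intervalIntegral.intervalIntegrable_rpow' (r := -(2⁻¹)) (a := a) (b := b)
      (by norm_num))
    rw [intervalIntegrable_iff, uIoc_of_le h] at this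
    exact this
  · simp [Ioc_eq_empty_of_le h]

lemma int_shift (t m : ℝ) (h : t ≤ m) :
    ∫ s in Ioc t m, (s - t) ^ (-(2⁻¹) : ℝ) = 2 * Real.sqrt (m - t) := by
  rw [← intervalIntegral.integral_of_le h,
    intervalIntegral.integral_comp_sub_right (fun u => u ^ (-(2⁻¹):ℝ)) t, sub_self,
    intervalIntegral.integral_of_le (by linarith), int_pow_neg_half _ (by linarith)]

lemma integrableOn_shift (t m : ℝ) :
    IntegrableOn (fun s : ℝ => (s - t) ^ (-(2⁻¹) : ℝ)) (Ioc t m) := by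
  rcases le_total t m with h | h
  · have h0 : IntervalIntegrable (fun u : ℝ => u ^ (-(2⁻¹):ℝ)) volume 0 (m - t) := by
      rw [intervalIntegrable_iff, uIoc_of_le (by linarith)]
      exact integrableOn_pow_neg_half 0 (m - t)
    have := h0.comp_sub_right t
    rw [intervalIntegrable_iff, zero_add, sub_add_cancel, uIoc_of_le h] at this
    exact this
  · simp [Ioc_eq_empty_of_le h]

lemma int_reflect (m T : ℝ) (h : m ≤ T) :
    ∫ s in Ioc m T, (T - s) ^ (-(2⁻¹) : ℝ) = 2 * Real.sqrt (T - m) := by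
  rw [← intervalIntegral.integral_of_le h,
    intervalIntegral.integral_comp_sub_left (fun u => u ^ (-(2⁻¹):ℝ)) T, sub_self,
    intervalIntegral.integral_of_le (by linarith), int_pow_neg_half _ (by linarith)]

lemma integrableOn_reflect (m T : ℝ) :
    IntegrableOn (fun s : ℝ => (T - s) ^ (-(2⁻¹) : ℝ)) (Ioc m T) := by
  rcases le_total m T with h | h
  · have h0 : IntervalIntegrable (fun u : ℝ => u ^ (-(2⁻¹):ℝ)) volume 0 (T - m) := by
      rw [intervalIntegrable_iff, uIoc_of_le (by linarith)]
      exact integrableOn_pow_neg_half 0 (T - m)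
    have := h0.comp_sub_left T
    rw [intervalIntegrable_iff, sub_zero, sub_sub_cancel] at this
    rw [IntegrableOn, ← uIoc_of_le h]
    exact this.mono_set (by rw [uIoc_comm])
  · simp [Ioc_eq_empty_of_le h]

lemma exp_neg_integral (lam a b : ℝ) (hlam : 0 < lam) (hab : a ≤ b) :
    ∫ u in a..b, Real.exp (-(lam * u)) =
      (Real.exp (-(lam * a)) - Real.exp (-(lam * b))) / lam := by
  have hd : ∀ u ∈ uIcc a b, HasDerivAt (fun v => -(Real.exp (-(lam * v)) / lam))
      (Real.exp (-(lam * u))) u := by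
    intro u _
    have h1 : HasDerivAt (fun v : ℝ => -(lam * v)) (-lam) u := by
      have h0 : HasDerivAt (fun v : ℝ => lam * v) lam u := by
        simpa using (hasDerivAt_id u).const_mul lam
      exact h0.neg
    have h2 := h1.exp
    have h3 : HasDerivAt (fun v => -(Real.exp (-(lam * v)) / lam))
        (-(Real.exp (-(lam * u)) * -lam / lam)) u := (h2.div_const lam).neg
    convert h3 using 1
    field_simp
  rw [intervalIntegral.integral_eq_sub_of_hasDerivAt hd
    ((Real.continuous_exp.comp (by continuity)).intervalIntegrable a b)]
  ring

lemma integrableOn_exp_pow (lam b : ℝ) (hlam : 0 ≤ lam) :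
    IntegrableOn (fun u : ℝ => Real.exp (-(lam * u)) * u ^ (-(2⁻¹) : ℝ)) (Ioc 0 b) := by
  rcases le_or_gt 0 b with h | h
  · · refine (integrableOn_pow_neg_half 0 b).mono' ?_ ?_
      · exact ((Real.measurable_exp.comp (measurable_id.const_mul lam).neg).mul
          (measurable_id.pow_const _)).aestronglyMeasurable
      · filter_upwards [ae_restrict_mem measurableSet_Ioc] with u hu
        rw [norm_mul, Real.norm_eq_abs, Real.norm_eq_abs,
          abs_of_nonneg (Real.exp_pos _).le, abs_of_nonneg (Real.rpow_nonneg (by linarith [hu.1]) _)]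
        nth_rewrite 2 [← one_mul ((u:ℝ) ^ (-(2⁻¹):ℝ))]
        exact mul_le_mul_of_nonneg_right (Real.exp_le_one_iff.2 (by nlinarith [hu.1]))
          (Real.rpow_nonneg (by linarith [hu.1]) _)
  · simp [Ioc_eq_empty_of_le h.le]

lemma Kbound (lam s : ℝ) (hlam : 1 ≤ lam) (hs : 0 < s) :
    ∫ u in Ioc (0:ℝ) s, Real.exp (-(lam * u)) * u ^ (-(2⁻¹) : ℝ) ≤ 3 / Real.sqrt lam := by
  have hlam0 : 0 < lam := by linarith
  have hsq : 0 < Real.sqrt lam := Real.sqrt_pos.2 hlam0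
  have hmono : ∀ c : ℝ, 0 < c →
      ∫ u in Ioc (0:ℝ) c, Real.exp (-(lam * u)) * u ^ (-(2⁻¹) : ℝ) ≤ 2 * Real.sqrt c := by
    intro c hc
    rw [← int_pow_neg_half c hc.le]
    refine setIntegral_mono_on (integrableOn_exp_pow lam c hlam0.le)
      (integrableOn_pow_neg_half 0 c) measurableSet_Ioc ?_
    intro u hu
    nth_rewrite 2 [← one_mul ((u:ℝ) ^ (-(2⁻¹):ℝ))]
    exact mul_le_mul_of_nonneg_right (Real.exp_le_one_iff.2 (by nlinarith [hu.1]))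
      (Real.rpow_nonneg hu.1.le _)
  have hinv : Real.sqrt (lam⁻¹) = (Real.sqrt lam)⁻¹ := by
    rw [← Real.sqrt_inv]
  rcases le_or_gt s lam⁻¹ with hcase | hcase
  · calc _ ≤ 2 * Real.sqrt s := hmono s hs
    _ ≤ 2 * Real.sqrt lam⁻¹ := by
        exact mul_le_mul_of_nonneg_left (Real.sqrt_le_sqrt hcase) (by norm_num)
    _ ≤ 3 / Real.sqrt lam := by
        rw [hinv]
        rw [div_eq_mul_inv]
        exact mul_le_mul_of_nonneg_right (by norm_num) (by positivity)
  · have hsplit : Ioc (0:ℝ) s = Ioc 0 lam⁻¹ ∪ Ioc lam⁻¹ s :=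
      (Ioc_union_Ioc_eq_Ioc (by positivity) hcase.le).symm
    rw [hsplit, setIntegral_union (Set.Ioc_disjoint_Ioc_of_le le_rfl) measurableSet_Ioc
      ((integrableOn_exp_pow lam s hlam0.le).mono_set (by rw [hsplit]; exact subset_union_left))
      ((integrableOn_exp_pow lam s hlam0.le).mono_set (by rw [hsplit]; exact subset_union_right))]
    have h1 : ∫ u in Ioc (0:ℝ) lam⁻¹, Real.exp (-(lam * u)) * u ^ (-(2⁻¹) : ℝ)
        ≤ 2 / Real.sqrt lam := by
      calc _ ≤ 2 * Real.sqrt lam⁻¹ := hmono _ (by positivity)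
      _ = 2 / Real.sqrt lam := by rw [hinv, div_eq_mul_inv]
    have h2 : ∫ u in Ioc lam⁻¹ s, Real.exp (-(lam * u)) * u ^ (-(2⁻¹) : ℝ)
        ≤ 1 / Real.sqrt lam := by
      have step : ∀ u ∈ Ioc lam⁻¹ s, Real.exp (-(lam * u)) * u ^ (-(2⁻¹) : ℝ)
          ≤ Real.exp (-(lam * u)) * Real.sqrt lam := by
        intro u hu
        refine mul_le_mul_of_nonneg_left ?_ (Real.exp_pos _).le
        have hu0 : (0:ℝ) < lam⁻¹ := by positivity
        calc (u:ℝ) ^ (-(2⁻¹):ℝ) ≤ (lam⁻¹) ^ (-(2⁻¹):ℝ) :=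
              Real.rpow_le_rpow_of_nonpos hu0 hu.1.le (by norm_num)
        _ = Real.sqrt lam := by
            rw [Real.rpow_neg (by positivity), Real.inv_rpow hlam0.le, inv_inv,
              Real.sqrt_eq_rpow]
            norm_num
      calc _ ≤ ∫ u in Ioc lam⁻¹ s, Real.exp (-(lam * u)) * Real.sqrt lam := by
            refine setIntegral_mono_on
              ((integrableOn_exp_pow lam s hlam0.le).mono_set (by
                rw [hsplit]; exact subset_union_right)) ?_ measurableSet_Ioc step
            exact (((Real.continuous_exp.comp (by continuity)).mul continuous_const)).integrableOn_Ioc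
      _ = (∫ u in Ioc lam⁻¹ s, Real.exp (-(lam * u))) * Real.sqrt lam := by
            rw [integral_mul_const]
      _ ≤ (1 / lam) * Real.sqrt lam := by
            refine mul_le_mul_of_nonneg_right ?_ hsq.le
            rw [← intervalIntegral.integral_of_le hcase.le, exp_neg_integral lam _ _ hlam0 hcase.le]
            rw [div_le_div_iff₀ hlam0 hlam0]
            have := Real.exp_pos (-(lam * s))
            have h3 : Real.exp (-(lam * lam⁻¹)) ≤ 1 := Real.exp_le_one_iff.2 (by
              rw [mul_inv_cancel₀ hlam0.ne']; norm_num)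
            nlinarith
      _ = 1 / Real.sqrt lam := by
            rw [div_mul_eq_mul_div, one_mul, div_eq_div_iff hlam0.ne' hsq.ne', one_mul,
              Real.mul_self_sqrt hlam0.le]
    have : (2:ℝ) / Real.sqrt lam + 1 / Real.sqrt lam = 3 / Real.sqrt lam := by ring
    linarith

lemma swap_region (T : ℝ) (F : ℝ → ℝ → ENNReal) (hF : Measurable (Function.uncurry F)) :
    ∫⁻ t in Icc (0:ℝ) T, ∫⁻ s in Ioc t T, F t s =
      ∫⁻ s in Ioc (0:ℝ) T, ∫⁻ t in Ico 0 s, F t s := by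
  set A : Set (ℝ × ℝ) := {p | 0 ≤ p.1 ∧ p.1 < p.2 ∧ p.2 ≤ T} with hAdef
  have hA : MeasurableSet A :=
    (measurableSet_le measurable_const measurable_fst).inter
      ((measurableSet_lt measurable_fst measurable_snd).inter
        (measurableSet_le measurable_snd measurable_const))
  have hG : Measurable fun p : ℝ × ℝ => A.indicator (Function.uncurry F) p :=
    hF.indicator hA
  have L : ∀ t : ℝ, (∫⁻ s, A.indicator (Function.uncurry F) (t, s)) =
      (Icc (0:ℝ) T).indicator (fun t => ∫⁻ s in Ioc t T, F t s) t := by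
    intro t
    by_cases ht : t ∈ Icc (0:ℝ) T
    · rw [indicator_of_mem ht, ← lintegral_indicator measurableSet_Ioc _]
      congr 1; funext s
      by_cases hs : s ∈ Ioc t T
      · rw [indicator_of_mem hs, indicator_of_mem (show (t,s) ∈ A from ⟨ht.1, hs.1, hs.2⟩)]; rfl
      · rw [indicator_of_notMem hs, indicator_of_notMem]
        intro hmem; exact hs ⟨hmem.2.1, hmem.2.2⟩
    · rw [indicator_of_notMem ht]
      have hz : ∀ s, A.indicator (Function.uncurry F) (t, s) = 0 := by
        intro s
        refine indicator_of_notMem ?_ _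
        intro hmem
        exact ht ⟨hmem.1, le_trans hmem.2.1.le hmem.2.2⟩
      simp only [hz, lintegral_zero]
  have R : ∀ s : ℝ, (∫⁻ t, A.indicator (Function.uncurry F) (t, s)) =
      (Ioc (0:ℝ) T).indicator (fun s => ∫⁻ t in Ico 0 s, F t s) s := by
    intro s
    by_cases hs : s ∈ Ioc (0:ℝ) T
    · rw [indicator_of_mem hs, ← lintegral_indicator measurableSet_Ico _]
      congr 1; funext t
      by_cases ht : t ∈ Ico (0:ℝ) s
      · rw [indicator_of_mem ht, indicator_of_mem (show (t,s) ∈ A from ⟨ht.1, ht.2, hs.2⟩)]; rfl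
      · rw [indicator_of_notMem ht, indicator_of_notMem]
        intro hmem; exact ht ⟨hmem.1, hmem.2.1⟩
    · rw [indicator_of_notMem hs]
      have hz : ∀ t, A.indicator (Function.uncurry F) (t, s) = 0 := by
        intro t
        refine indicator_of_notMem ?_ _
        intro hmem
        exact hs ⟨lt_of_le_of_lt hmem.1 hmem.2.1, hmem.2.2⟩
      simp only [hz, lintegral_zero]
  calc ∫⁻ t in Icc (0:ℝ) T, ∫⁻ s in Ioc t T, F t s
      = ∫⁻ t, (Icc (0:ℝ) T).indicator (fun t => ∫⁻ s in Ioc t T, F t s) t :=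
        (lintegral_indicator measurableSet_Icc _).symm
    _ = ∫⁻ t, ∫⁻ s, A.indicator (Function.uncurry F) (t, s) := by
        congr 1; funext t; exact (L t).symm
    _ = ∫⁻ s, ∫⁻ t, A.indicator (Function.uncurry F) (t, s) :=
        lintegral_lintegral_swap (by exact hG.aemeasurable)
    _ = ∫⁻ s, (Ioc (0:ℝ) T).indicator (fun s => ∫⁻ t in Ico 0 s, F t s) s := by
        congr 1; funext s; exact R s
    _ = ∫⁻ s in Ioc (0:ℝ) T, ∫⁻ t in Ico 0 s, F t s :=
        lintegral_indicator measurableSet_Ioc _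

lemma intOn_bdd {f : ℝ → ℝ} (mf : Measurable f) {s : Set ℝ} (hms : MeasurableSet s)
    (hs : volume s ≠ ⊤) {M : ℝ} (hb : ∀ x ∈ s, |f x| ≤ M) : IntegrableOn f s :=
  Measure.integrableOn_of_bounded hs mf.aestronglyMeasurable
    ((ae_restrict_mem hms).mono fun x hx => by
      rw [Real.norm_eq_abs]; exact hb x hx)

lemma div_sqrt_eq (a u : ℝ) : a / Real.sqrt u = a * u ^ (-(2⁻¹) : ℝ) := by
  rw [div_eq_mul_one_div, inv_sqrt_eq]

/-- inner kernel integrand integrability -/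
lemma inner_integrable (T t : ℝ) (g2 : ℝ → ℝ) (mg2 : Measurable g2) (M2 : ℝ)
    (ht : 0 ≤ t) (hM2 : ∀ s ∈ Icc (0:ℝ) T, |g2 s| ≤ M2) :
    IntegrableOn (fun s => g2 s / Real.sqrt (s - t)) (Ioc t T) := by
  refine ((integrableOn_shift t T).const_mul M2).mono' ?_ ?_
  · exact (mg2.div
      (Real.continuous_sqrt.measurable.comp (measurable_id.sub_const t))).aestronglyMeasurable
  · filter_upwards [ae_restrict_mem measurableSet_Ioc] with s hs
    have hst : 0 < Real.sqrt (s - t) := Real.sqrt_pos.2 (by linarith [hs.1])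
    rw [Real.norm_eq_abs, abs_div, abs_of_nonneg (Real.sqrt_nonneg _), ← div_sqrt_eq]
    exact (div_le_div_iff_of_pos_right hst).2 (hM2 s ⟨by linarith [hs.1], hs.2⟩)

lemma key_swap (T : ℝ) (lam : ℝ) (hlam : 1 ≤ lam)
    (g2 : ℝ → ℝ) (mg2 : Measurable g2) (nn2 : ∀ t ∈ Icc (0:ℝ) T, 0 ≤ g2 t) :
    (∫⁻ t in Icc (0:ℝ) T, ∫⁻ s in Ioc t T,
        ENNReal.ofReal (Real.exp (lam * t) * (g2 s / Real.sqrt (s - t))))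
      ≤ ENNReal.ofReal (3 / Real.sqrt lam) *
          ∫⁻ s in Ioc (0:ℝ) T, ENNReal.ofReal (g2 s * Real.exp (lam * s)) := by
  have hlam0 : (0:ℝ) < lam := by linarith
  set F : ℝ → ℝ → ENNReal := fun t s =>
    ENNReal.ofReal (Real.exp (lam * t) * (g2 s / Real.sqrt (s - t))) with hFdef
  have hF : Measurable (Function.uncurry F) := by
    apply ENNReal.measurable_ofReal.comp
    exact ((Real.measurable_exp.comp ((measurable_fst).const_mul lam)).mul
      ((mg2.comp measurable_snd).div
        (Real.continuous_sqrt.measurable.comp (measurable_snd.sub measurable_fst))))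
  rw [show (∫⁻ t in Icc (0:ℝ) T, ∫⁻ s in Ioc t T,
      ENNReal.ofReal (Real.exp (lam * t) * (g2 s / Real.sqrt (s - t)))) =
      ∫⁻ t in Icc (0:ℝ) T, ∫⁻ s in Ioc t T, F t s from rfl, swap_region T F hF]
  have inner : ∀ s ∈ Ioc (0:ℝ) T, (∫⁻ t in Ico 0 s, F t s)
      ≤ ENNReal.ofReal (g2 s * Real.exp (lam * s)) * ENNReal.ofReal (3 / Real.sqrt lam) := by
    intro s hs
    have hg2s : 0 ≤ g2 s := nn2 s ⟨hs.1.le, hs.2⟩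
    have hrw : (∫⁻ t in Ico 0 s, F t s) = ∫⁻ t in Ioc 0 s, F t s := by
      rw [Measure.restrict_congr_set Ico_ae_eq_Ioc]
    rw [hrw]
    have hptw : ∀ t, Real.exp (lam * t) * (g2 s / Real.sqrt (s - t))
        = g2 s * (Real.exp (lam * t) * (s - t) ^ (-(2⁻¹) : ℝ)) := by
      intro t; rw [div_sqrt_eq]; ring
    have hint : IntegrableOn (fun t => Real.exp (lam * t) * (g2 s / Real.sqrt (s - t)))
        (Ioc 0 s) := by
      refine ((integrableOn_reflect 0 s).const_mul (g2 s * Real.exp (lam * s))).mono' ?_ ?_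
      · exact ((Real.measurable_exp.comp (measurable_id.const_mul lam)).mul
          (mg2.comp measurable_const |>.div
            (Real.continuous_sqrt.measurable.comp (measurable_const.sub measurable_id)))).aestronglyMeasurable
      · filter_upwards [ae_restrict_mem measurableSet_Ioc] with t ht
        have h1 : Real.exp (lam * t) ≤ Real.exp (lam * s) :=
          Real.exp_le_exp.2 (by nlinarith [ht.2])
        have h2 : (0:ℝ) ≤ (s - t) ^ (-(2⁻¹) : ℝ) := Real.rpow_nonneg (by linarith [ht.2]) _
        rw [Real.norm_eq_abs, hptw t, abs_of_nonneg
          (mul_nonneg hg2s (mul_nonneg (Real.exp_pos _).le h2))]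
        calc g2 s * (Real.exp (lam * t) * (s - t) ^ (-(2⁻¹) : ℝ))
            ≤ g2 s * (Real.exp (lam * s) * (s - t) ^ (-(2⁻¹) : ℝ)) := by
              exact mul_le_mul_of_nonneg_left (mul_le_mul_of_nonneg_right h1 h2) hg2s
          _ = g2 s * Real.exp (lam * s) * (s - t) ^ (-(2⁻¹) : ℝ) := by ring
    have hnn : ∀ t, 0 ≤ Real.exp (lam * t) * (g2 s / Real.sqrt (s - t)) := by
      intro t; exact mul_nonneg (Real.exp_pos _).le (div_nonneg hg2s (Real.sqrt_nonneg _))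
    rw [show (fun t => F t s) = fun t =>
      ENNReal.ofReal (Real.exp (lam * t) * (g2 s / Real.sqrt (s - t))) from rfl,
      ← ofReal_integral_eq_lintegral_ofReal hint (ae_of_all _ hnn)]
    rw [← ENNReal.ofReal_mul (by positivity)]
    apply ENNReal.ofReal_le_ofReal
    have hchg : (∫ t in Ioc (0:ℝ) s, Real.exp (lam * t) * (s - t) ^ (-(2⁻¹) : ℝ))
        = Real.exp (lam * s) * ∫ u in Ioc (0:ℝ) s, Real.exp (-(lam * u)) * u ^ (-(2⁻¹) : ℝ) := by
      rw [← intervalIntegral.integral_of_le hs.1.le]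
      have h3 : ∀ t : ℝ, Real.exp (lam * t) * (s - t) ^ (-(2⁻¹) : ℝ)
          = (fun u => Real.exp (lam * s) * (Real.exp (-(lam * u)) * u ^ (-(2⁻¹) : ℝ))) (s - t) := by
        intro t
        show _ = Real.exp (lam * s) * (Real.exp (-(lam * (s - t))) * (s - t) ^ (-(2⁻¹) : ℝ))
        rw [show Real.exp (lam*s) * (Real.exp (-(lam*(s-t))) * (s-t)^(-(2⁻¹):ℝ)) =
          (Real.exp (lam*s) * Real.exp (-(lam*(s-t)))) * (s-t)^(-(2⁻¹):ℝ) from by ring,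
          ← Real.exp_add, show lam*s + -(lam*(s-t)) = lam*t from by ring]
      rw [intervalIntegral.integral_congr (fun t _ => h3 t),
        intervalIntegral.integral_comp_sub_left
          (fun u => Real.exp (lam * s) * (Real.exp (-(lam * u)) * u ^ (-(2⁻¹) : ℝ))) s,
        sub_self, sub_zero, intervalIntegral.integral_of_le hs.1.le, integral_const_mul]
    calc (∫ t in Ioc (0:ℝ) s, Real.exp (lam * t) * (g2 s / Real.sqrt (s - t)))
        = g2 s * ∫ t in Ioc (0:ℝ) s, Real.exp (lam * t) * (s - t) ^ (-(2⁻¹) : ℝ) := by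
          simp_rw [hptw]; rw [integral_const_mul]
      _ ≤ g2 s * (Real.exp (lam * s) * (3 / Real.sqrt lam)) := by
          refine mul_le_mul_of_nonneg_left ?_ hg2s
          rw [hchg]
          exact mul_le_mul_of_nonneg_left (Kbound lam s hlam hs.1) (Real.exp_pos _).le
      _ = g2 s * Real.exp (lam * s) * (3 / Real.sqrt lam) := by ring
  calc (∫⁻ s in Ioc (0:ℝ) T, ∫⁻ t in Ico 0 s, F t s)
      ≤ ∫⁻ s in Ioc (0:ℝ) T,
          ENNReal.ofReal (g2 s * Real.exp (lam * s)) * ENNReal.ofReal (3 / Real.sqrt lam) :=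
        setLIntegral_mono' measurableSet_Ioc inner
    _ = ENNReal.ofReal (3 / Real.sqrt lam) *
          ∫⁻ s in Ioc (0:ℝ) T, ENNReal.ofReal (g2 s * Real.exp (lam * s)) := by
        rw [lintegral_mul_const' _ _ ENNReal.ofReal_ne_top, mul_comm]

lemma part1 (T : ℝ) (hT : 0 < T) (C2 : ℝ) (hC2 : 0 ≤ C2) (lam : ℝ) (hlam : 1 ≤ lam)
    (hhalf : C2 * (3 / Real.sqrt lam) ≤ 1/2)
    (g1 g2 : ℝ → ℝ) (C1 : ℝ) (hC1 : 0 ≤ C1) (mg1 : Measurable g1) (mg2 : Measurable g2)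
    (nn1 : ∀ t ∈ Icc (0:ℝ) T, 0 ≤ g1 t) (nn2 : ∀ t ∈ Icc (0:ℝ) T, 0 ≤ g2 t)
    (M1 : ℝ) (hM1 : ∀ t ∈ Icc (0:ℝ) T, g1 t ≤ M1)
    (M2 : ℝ) (hM2 : ∀ t ∈ Icc (0:ℝ) T, g2 t ≤ M2)
    (hyp : ∀ t ∈ Ico (0:ℝ) T, g1 t ≤ C1 / Real.sqrt (T - t) +
      C2 * ∫ s in Ioc t T, g2 s / Real.sqrt (s - t)) :
    (∫ t in Icc (0:ℝ) T, g1 t * Real.exp (lam * t))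
      ≤ (Real.exp (lam * T) * (2 * Real.sqrt T)) * C1
        + (1/2) * ∫ t in Icc (0:ℝ) T, g2 t * Real.exp (lam * t) := by
  have hlam0 : (0:ℝ) < lam := by linarith
  have habs1 : ∀ t ∈ Icc (0:ℝ) T, |g1 t| ≤ M1 := fun t ht => by
    rw [abs_of_nonneg (nn1 t ht)]; exact hM1 t ht
  have habs2 : ∀ t ∈ Icc (0:ℝ) T, |g2 t| ≤ M2 := fun t ht => by
    rw [abs_of_nonneg (nn2 t ht)]; exact hM2 t ht
  have hM1nn : 0 ≤ M1 := le_trans (nn1 0 ⟨le_refl 0, hT.le⟩) (hM1 0 ⟨le_refl 0, hT.le⟩)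
  have hM2nn : 0 ≤ M2 := le_trans (nn2 0 ⟨le_refl 0, hT.le⟩) (hM2 0 ⟨le_refl 0, hT.le⟩)
  have hvol : volume (Icc (0:ℝ) T) ≠ ⊤ := measure_Icc_lt_top.ne
  have me1 : Measurable fun t => g1 t * Real.exp (lam * t) :=
    mg1.mul (Real.measurable_exp.comp (measurable_id.const_mul lam))
  have me2 : Measurable fun t => g2 t * Real.exp (lam * t) :=
    mg2.mul (Real.measurable_exp.comp (measurable_id.const_mul lam))
  have hexp_bdd : ∀ t ∈ Icc (0:ℝ) T, Real.exp (lam * t) ≤ Real.exp (lam * T) :=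
    fun t ht => Real.exp_le_exp.2 (by nlinarith [ht.2])
  have int_g1e : IntegrableOn (fun t => g1 t * Real.exp (lam * t)) (Icc (0:ℝ) T) := by
    refine intOn_bdd me1 measurableSet_Icc hvol (M := M1 * Real.exp (lam * T)) ?_
    intro t ht
    rw [abs_mul, abs_of_nonneg (Real.exp_pos _).le]
    exact mul_le_mul (habs1 t ht) (hexp_bdd t ht) (Real.exp_pos _).le hM1nn
  have int_g2e : IntegrableOn (fun t => g2 t * Real.exp (lam * t)) (Icc (0:ℝ) T) := by
    refine intOn_bdd me2 measurableSet_Icc hvol (M := M2 * Real.exp (lam * T)) ?_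
    intro t ht
    rw [abs_mul, abs_of_nonneg (Real.exp_pos _).le]
    exact mul_le_mul (habs2 t ht) (hexp_bdd t ht) (Real.exp_pos _).le hM2nn
  set X2 : ℝ := ∫ t in Icc (0:ℝ) T, g2 t * Real.exp (lam * t) with hX2def
  have hX2 : 0 ≤ X2 := setIntegral_nonneg measurableSet_Icc
    (fun t ht => mul_nonneg (nn2 t ht) (Real.exp_pos _).le)
  set B : ℝ → ENNReal := fun t =>
    ∫⁻ s in Ioc t T, ENNReal.ofReal (Real.exp (lam * t) * (g2 s / Real.sqrt (s - t))) with hBdef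
  have heq1 : ENNReal.ofReal (∫ t in Icc (0:ℝ) T, g1 t * Real.exp (lam * t))
      = ∫⁻ t in Icc (0:ℝ) T, ENNReal.ofReal (g1 t * Real.exp (lam * t)) :=
    ofReal_integral_eq_lintegral_ofReal int_g1e
      ((ae_restrict_mem measurableSet_Icc).mono fun t ht =>
        mul_nonneg (nn1 t ht) (Real.exp_pos _).le)
  have hne : ∀ᵐ (t : ℝ) ∂(volume.restrict (Icc (0:ℝ) T)), t ≠ T := by
    refine ae_iff.2 ?_
    have hset : {t : ℝ | ¬ t ≠ T} = {T} := by ext x; simp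
    rw [hset]
    exact le_antisymm ((Measure.restrict_apply_le _ _).trans (by simp)) zero_le
  have hae : ∀ᵐ t ∂(volume.restrict (Icc (0:ℝ) T)),
      ENNReal.ofReal (g1 t * Real.exp (lam * t))
        ≤ ENNReal.ofReal (C1 / Real.sqrt (T - t) * Real.exp (lam * t))
          + ENNReal.ofReal C2 * B t := by
    filter_upwards [ae_restrict_mem measurableSet_Icc, hne] with t ht htne
    have htT : t < T := lt_of_le_of_ne ht.2 htne
    set I : ℝ := ∫ s in Ioc t T, g2 s / Real.sqrt (s - t) with hIdef
    have hInn : 0 ≤ I := setIntegral_nonneg measurableSet_Ioc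
      (fun s hs => div_nonneg (nn2 s ⟨le_trans ht.1 hs.1.le, hs.2⟩) (Real.sqrt_nonneg _))
    have h := hyp t ⟨ht.1, htT⟩
    have hBt : ENNReal.ofReal (Real.exp (lam * t) * I) = B t := by
      rw [hBdef]
      have : Real.exp (lam * t) * I
          = ∫ s in Ioc t T, Real.exp (lam * t) * (g2 s / Real.sqrt (s - t)) := by
        rw [hIdef, integral_const_mul]
      rw [this]
      refine ofReal_integral_eq_lintegral_ofReal
        ((inner_integrable T t g2 mg2 M2 ht.1 habs2).const_mul _) ?_
      filter_upwards [ae_restrict_mem measurableSet_Ioc] with s hs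
      exact mul_nonneg (Real.exp_pos _).le
        (div_nonneg (nn2 s ⟨le_trans ht.1 hs.1.le, hs.2⟩) (Real.sqrt_nonneg _))
    calc ENNReal.ofReal (g1 t * Real.exp (lam * t))
        ≤ ENNReal.ofReal ((C1 / Real.sqrt (T - t) + C2 * I) * Real.exp (lam * t)) :=
          ENNReal.ofReal_le_ofReal
            (mul_le_mul_of_nonneg_right h (Real.exp_pos _).le)
      _ = ENNReal.ofReal (C1 / Real.sqrt (T - t) * Real.exp (lam * t)
            + C2 * (Real.exp (lam * t) * I)) := by ring_nf
      _ ≤ ENNReal.ofReal (C1 / Real.sqrt (T - t) * Real.exp (lam * t))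
            + ENNReal.ofReal (C2 * (Real.exp (lam * t) * I)) := ENNReal.ofReal_add_le
      _ = ENNReal.ofReal (C1 / Real.sqrt (T - t) * Real.exp (lam * t))
            + ENNReal.ofReal C2 * B t := by
          rw [ENNReal.ofReal_mul hC2, hBt]
  have step1 : (∫⁻ t in Icc (0:ℝ) T, ENNReal.ofReal (g1 t * Real.exp (lam * t)))
      ≤ (∫⁻ t in Icc (0:ℝ) T, ENNReal.ofReal (C1 / Real.sqrt (T - t) * Real.exp (lam * t)))
        + ENNReal.ofReal C2 * ∫⁻ t in Icc (0:ℝ) T, B t := by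
    calc (∫⁻ t in Icc (0:ℝ) T, ENNReal.ofReal (g1 t * Real.exp (lam * t)))
        ≤ ∫⁻ t in Icc (0:ℝ) T, (ENNReal.ofReal (C1 / Real.sqrt (T - t) * Real.exp (lam * t))
            + ENNReal.ofReal C2 * B t) := lintegral_mono_ae hae
      _ = (∫⁻ t in Icc (0:ℝ) T, ENNReal.ofReal (C1 / Real.sqrt (T - t) * Real.exp (lam * t)))
            + ∫⁻ t in Icc (0:ℝ) T, ENNReal.ofReal C2 * B t := by
          refine lintegral_add_left ?_ _
          exact ENNReal.measurable_ofReal.comp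
            (((measurable_const.div
              (Real.continuous_sqrt.measurable.comp (measurable_const.sub measurable_id)))).mul
              (Real.measurable_exp.comp (measurable_id.const_mul lam)))
      _ = (∫⁻ t in Icc (0:ℝ) T, ENNReal.ofReal (C1 / Real.sqrt (T - t) * Real.exp (lam * t)))
            + ENNReal.ofReal C2 * ∫⁻ t in Icc (0:ℝ) T, B t := by
          rw [lintegral_const_mul' _ _ ENNReal.ofReal_ne_top]
  have first_bound : (∫⁻ t in Icc (0:ℝ) T,
      ENNReal.ofReal (C1 / Real.sqrt (T - t) * Real.exp (lam * t)))
      ≤ ENNReal.ofReal (Real.exp (lam * T) * (2 * Real.sqrt T) * C1) := by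
    have hptw : ∀ t ∈ Icc (0:ℝ) T,
        ENNReal.ofReal (C1 / Real.sqrt (T - t) * Real.exp (lam * t))
          ≤ ENNReal.ofReal (C1 * Real.exp (lam * T) * (T - t) ^ (-(2⁻¹) : ℝ)) := by
      intro t ht
      apply ENNReal.ofReal_le_ofReal
      rw [div_sqrt_eq]
      have h2 : (0:ℝ) ≤ (T - t) ^ (-(2⁻¹) : ℝ) := Real.rpow_nonneg (by linarith [ht.2]) _
      calc C1 * (T - t) ^ (-(2⁻¹) : ℝ) * Real.exp (lam * t)
          ≤ C1 * (T - t) ^ (-(2⁻¹) : ℝ) * Real.exp (lam * T) :=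
            mul_le_mul_of_nonneg_left (hexp_bdd t ht) (mul_nonneg hC1 h2)
        _ = C1 * Real.exp (lam * T) * (T - t) ^ (-(2⁻¹) : ℝ) := by ring
    calc (∫⁻ t in Icc (0:ℝ) T, ENNReal.ofReal (C1 / Real.sqrt (T - t) * Real.exp (lam * t)))
        ≤ ∫⁻ t in Icc (0:ℝ) T,
            ENNReal.ofReal (C1 * Real.exp (lam * T) * (T - t) ^ (-(2⁻¹) : ℝ)) :=
          setLIntegral_mono' measurableSet_Icc hptw
      _ = ENNReal.ofReal (∫ t in Icc (0:ℝ) T,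
            C1 * Real.exp (lam * T) * (T - t) ^ (-(2⁻¹) : ℝ)) := by
          refine (ofReal_integral_eq_lintegral_ofReal ?_ ?_).symm
          · exact (integrableOn_Icc_iff_integrableOn_Ioc).2
              ((integrableOn_reflect 0 T).const_mul _)
          · filter_upwards [ae_restrict_mem measurableSet_Icc] with t ht
            exact mul_nonneg (mul_nonneg hC1 (Real.exp_pos _).le)
              (Real.rpow_nonneg (by linarith [ht.2]) _)
      _ ≤ ENNReal.ofReal (Real.exp (lam * T) * (2 * Real.sqrt T) * C1) := by
          apply ENNReal.ofReal_le_ofReal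
          rw [MeasureTheory.integral_Icc_eq_integral_Ioc, integral_const_mul, int_reflect 0 T hT.le,
            sub_zero]
          apply le_of_eq; ring
  have second_bound : ENNReal.ofReal C2 * (∫⁻ t in Icc (0:ℝ) T, B t)
      ≤ ENNReal.ofReal ((1/2) * X2) := by
    calc ENNReal.ofReal C2 * (∫⁻ t in Icc (0:ℝ) T, B t)
        ≤ ENNReal.ofReal C2 * (ENNReal.ofReal (3 / Real.sqrt lam) *
            ∫⁻ s in Ioc (0:ℝ) T, ENNReal.ofReal (g2 s * Real.exp (lam * s))) :=
          mul_le_mul_right (key_swap T lam hlam g2 mg2 nn2) _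
      _ = ENNReal.ofReal C2 * (ENNReal.ofReal (3 / Real.sqrt lam) * ENNReal.ofReal X2) := by
          rw [Measure.restrict_congr_set Ioc_ae_eq_Icc,
            ← ofReal_integral_eq_lintegral_ofReal int_g2e
              ((ae_restrict_mem measurableSet_Icc).mono fun t ht =>
                mul_nonneg (nn2 t ht) (Real.exp_pos _).le)]
      _ = ENNReal.ofReal (C2 * (3 / Real.sqrt lam) * X2) := by
          rw [ENNReal.ofReal_mul (mul_nonneg hC2 (by positivity)), ENNReal.ofReal_mul hC2,
            mul_assoc]
      _ ≤ ENNReal.ofReal ((1/2) * X2) :=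
          ENNReal.ofReal_le_ofReal (mul_le_mul_of_nonneg_right hhalf hX2)
  have final : ENNReal.ofReal (∫ t in Icc (0:ℝ) T, g1 t * Real.exp (lam * t))
      ≤ ENNReal.ofReal ((Real.exp (lam * T) * (2 * Real.sqrt T)) * C1 + (1/2) * X2) := by
    rw [heq1]
    refine le_trans step1 (le_trans (add_le_add first_bound second_bound) ?_)
    rw [← ENNReal.ofReal_add (by positivity) (by positivity)]
  exact (ENNReal.ofReal_le_ofReal_iff (by positivity)).1 final

lemma part2 (T : ℝ) (hT : 0 < T) (C2 : ℝ) (hC2 : 0 ≤ C2) (delta eta : ℝ)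
    (hdelta : 0 < delta) (hdT : delta ≤ T) (heta : 0 < eta) (hetad : 2 * eta ≤ delta)
    (hcondA : 4 * C2 * Real.sqrt delta ≤ 1/2)
    (hcondB : C2 * Real.sqrt T * (Real.sqrt 2 / Real.sqrt delta) * (2 * Real.sqrt eta) ≤ 1/2)
    (g1 g2 : ℝ → ℝ) (C1 : ℝ) (hC1 : 0 ≤ C1) (mg1 : Measurable g1) (mg2 : Measurable g2)
    (nn1 : ∀ t ∈ Icc (0:ℝ) T, 0 ≤ g1 t) (nn2 : ∀ t ∈ Icc (0:ℝ) T, 0 ≤ g2 t)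
    (M2 : ℝ) (hM2 : ∀ t ∈ Icc (0:ℝ) T, g2 t ≤ M2)
    (hyp : ∀ t ∈ Ico (0:ℝ) T, g1 t ≤ C1 / Real.sqrt (T - t) +
      C2 * ∫ s in Ioc t T, g2 s / Real.sqrt (s - t)) :
    (⨆ t : Icc (0:ℝ) T, Real.sqrt (T - t) * g1 t)
      ≤ C1 + (Real.sqrt T * C2 / Real.sqrt eta) * (∫ t in Icc (0:ℝ) T, g2 t)
        + (1/2) * ⨆ t : Icc (0:ℝ) T, Real.sqrt (T - t) * g2 t := by
  haveI : Nonempty (Icc (0:ℝ) T) := ⟨⟨0, le_refl 0, hT.le⟩⟩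
  have habs2 : ∀ t ∈ Icc (0:ℝ) T, |g2 t| ≤ M2 := fun t ht => by
    rw [abs_of_nonneg (nn2 t ht)]; exact hM2 t ht
  have hvol : volume (Icc (0:ℝ) T) ≠ ⊤ := measure_Icc_lt_top.ne
  have int_g2 : IntegrableOn g2 (Icc (0:ℝ) T) := intOn_bdd mg2 measurableSet_Icc hvol habs2
  set G : ℝ := ∫ t in Icc (0:ℝ) T, g2 t with hGdef
  have hG : 0 ≤ G := setIntegral_nonneg measurableSet_Icc nn2
  set S2 : ℝ := ⨆ t : Icc (0:ℝ) T, Real.sqrt (T - t) * g2 t with hS2def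
  have hbdd : BddAbove (range fun t : Icc (0:ℝ) T => Real.sqrt (T - t) * g2 t) := by
    refine ⟨Real.sqrt T * M2, ?_⟩
    rintro x ⟨t, rfl⟩
    exact mul_le_mul (Real.sqrt_le_sqrt (by linarith [t.2.1])) (hM2 t t.2) (nn2 t t.2)
      (Real.sqrt_nonneg _)
  have hS2 : ∀ s ∈ Icc (0:ℝ) T, Real.sqrt (T - s) * g2 s ≤ S2 := fun s hs =>
    le_ciSup hbdd (⟨s, hs⟩ : Icc (0:ℝ) T)
  have hS2nn : 0 ≤ S2 := by
    have := hS2 T ⟨hT.le, le_refl T⟩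
    rwa [sub_self, Real.sqrt_zero, zero_mul] at this
  have hg2div : ∀ s ∈ Icc (0:ℝ) T, ∀ w : ℝ, 0 < w → w ≤ Real.sqrt (T - s) → g2 s ≤ S2 / w := by
    intro s hs w hw hws
    rw [le_div_iff₀ hw]
    calc g2 s * w ≤ g2 s * Real.sqrt (T - s) :=
          mul_le_mul_of_nonneg_left hws (nn2 s hs)
      _ = Real.sqrt (T - s) * g2 s := mul_comm _ _
      _ ≤ S2 := hS2 s hs
  have coeff_nn : 0 ≤ Real.sqrt T * C2 / Real.sqrt eta := by positivity
  refine ciSup_le ?_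
  rintro ⟨t, ht⟩
  simp only
  by_cases htT : t = T
  · subst htT
    rw [sub_self, Real.sqrt_zero, zero_mul]
    have : 0 ≤ (1/2) * S2 := by linarith
    nlinarith [mul_nonneg coeff_nn hG]
  have htT' : t < T := lt_of_le_of_ne ht.2 htT
  set I : ℝ := ∫ s in Ioc t T, g2 s / Real.sqrt (s - t) with hIdef
  have hInt : IntegrableOn (fun s => g2 s / Real.sqrt (s - t)) (Ioc t T) :=
    inner_integrable T t g2 mg2 M2 ht.1 habs2
  have hInn : 0 ≤ I := setIntegral_nonneg measurableSet_Ioc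
    (fun s hs => div_nonneg (nn2 s ⟨le_trans ht.1 hs.1.le, hs.2⟩) (Real.sqrt_nonneg _))
  have h := hyp t ⟨ht.1, htT'⟩
  -- the split bound, for any midpoint m with t < m < T and bounds K1 K2 as appropriate
  have hsplit : ∀ m : ℝ, t < m → m < T →
      I = (∫ s in Ioc t m, g2 s / Real.sqrt (s - t))
        + ∫ s in Ioc m T, g2 s / Real.sqrt (s - t) := by
    intro m hm1 hm2
    rw [hIdef, show Ioc t T = Ioc t m ∪ Ioc m T from (Ioc_union_Ioc_eq_Ioc hm1.le hm2.le).symm,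
      setIntegral_union (Ioc_disjoint_Ioc_of_le le_rfl) measurableSet_Ioc
        (hInt.mono_set (Ioc_subset_Ioc_right hm2.le))
        (hInt.mono_set (Ioc_subset_Ioc_left hm1.le))]
  -- bound on the first piece given a uniform bound K on g2 over Ioc t m
  have hpiece1 : ∀ m K : ℝ, t < m → m ≤ T → 0 ≤ K → (∀ s ∈ Ioc t m, g2 s ≤ K) →
      (∫ s in Ioc t m, g2 s / Real.sqrt (s - t)) ≤ K * (2 * Real.sqrt (m - t)) := by
    intro m K hm1 hm2 hK hbound
    calc (∫ s in Ioc t m, g2 s / Real.sqrt (s - t))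
        ≤ ∫ s in Ioc t m, K * (s - t) ^ (-(2⁻¹) : ℝ) := by
          refine setIntegral_mono_on (hInt.mono_set (Ioc_subset_Ioc_right hm2))
            ((integrableOn_shift t m).const_mul K) measurableSet_Ioc ?_
          intro s hs
          rw [div_sqrt_eq]
          exact mul_le_mul_of_nonneg_right (hbound s hs)
            (Real.rpow_nonneg (by linarith [hs.1]) _)
      _ = K * (2 * Real.sqrt (m - t)) := by rw [integral_const_mul, int_shift t m (by linarith)]
  -- case A : T - t ≤ delta
  have key : Real.sqrt (T - t) * (C2 * I)
      ≤ (Real.sqrt T * C2 / Real.sqrt eta) * G + (1/2) * S2 := by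
    by_cases hcase : T - t ≤ delta
    · -- near the terminal time
      set m0 : ℝ := (t + T) / 2 with hm0def
      have hm01 : t < m0 := by rw [hm0def]; linarith
      have hm02 : m0 < T := by rw [hm0def]; linarith
      have hw : Real.sqrt (T - m0) = Real.sqrt (m0 - t) := by
        congr 1; rw [hm0def]; ring
      have hwpos : 0 < Real.sqrt (m0 - t) := Real.sqrt_pos.2 (by linarith)
      have hb1 : (∫ s in Ioc t m0, g2 s / Real.sqrt (s - t))
          ≤ (S2 / Real.sqrt (m0 - t)) * (2 * Real.sqrt (m0 - t)) := by
        refine hpiece1 m0 _ hm01 hm02.le (by positivity) ?_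
        intro s hs
        rw [← hw]
        exact hg2div s ⟨by linarith [hs.1], by linarith [hs.2]⟩ _ (hw ▸ hwpos)
          (Real.sqrt_le_sqrt (by linarith [hs.2]))
      have hb2 : (∫ s in Ioc m0 T, g2 s / Real.sqrt (s - t))
          ≤ (S2 / Real.sqrt (m0 - t)) * (2 * Real.sqrt (T - m0)) := by
        rw [MeasureTheory.integral_Ioc_eq_integral_Ioo]
        calc (∫ s in Ioo m0 T, g2 s / Real.sqrt (s - t))
            ≤ ∫ s in Ioo m0 T, (S2 / Real.sqrt (m0 - t)) * (T - s) ^ (-(2⁻¹) : ℝ) := by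
              refine setIntegral_mono_on
                (hInt.mono_set (fun s hs => ⟨by linarith [hs.1], hs.2.le⟩))
                (MeasureTheory.IntegrableOn.mono_set ((integrableOn_reflect m0 T).const_mul _) Ioo_subset_Ioc_self)
                measurableSet_Ioo ?_
              intro s hs
              have hsT : 0 < Real.sqrt (T - s) := Real.sqrt_pos.2 (by linarith [hs.2])
              have hnum : g2 s ≤ S2 / Real.sqrt (T - s) :=
                hg2div s ⟨by linarith [hs.1], hs.2.le⟩ _ hsT (le_refl _)
              have hden : Real.sqrt (m0 - t) ≤ Real.sqrt (s - t) :=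
                Real.sqrt_le_sqrt (by linarith [hs.1])
              calc g2 s / Real.sqrt (s - t)
                  ≤ (S2 / Real.sqrt (T - s)) / Real.sqrt (m0 - t) :=
                    div_le_div₀ (by positivity) hnum hwpos hden
                _ = (S2 / Real.sqrt (m0 - t)) * (1 / Real.sqrt (T - s)) := by
                    field_simp
                _ = (S2 / Real.sqrt (m0 - t)) * (T - s) ^ (-(2⁻¹) : ℝ) := by
                    rw [inv_sqrt_eq]
          _ = (S2 / Real.sqrt (m0 - t)) * (2 * Real.sqrt (T - m0)) := by
              rw [← MeasureTheory.integral_Ioc_eq_integral_Ioo, integral_const_mul,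
                int_reflect m0 T hm02.le]
      have hI4 : I ≤ 4 * S2 := by
        rw [hsplit m0 hm01 hm02]
        have e1 : (S2 / Real.sqrt (m0 - t)) * (2 * Real.sqrt (m0 - t)) = 2 * S2 := by
          field_simp
        have e2 : (S2 / Real.sqrt (m0 - t)) * (2 * Real.sqrt (T - m0)) = 2 * S2 := by
          rw [hw]; field_simp
        linarith [hb1, hb2]
      have hsd : Real.sqrt (T - t) ≤ Real.sqrt delta := Real.sqrt_le_sqrt hcase
      calc Real.sqrt (T - t) * (C2 * I) ≤ Real.sqrt delta * (C2 * (4 * S2)) := by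
            refine mul_le_mul hsd (mul_le_mul_of_nonneg_left hI4 hC2) ?_ (Real.sqrt_nonneg _)
            positivity
        _ = (4 * C2 * Real.sqrt delta) * S2 := by ring
        _ ≤ (1/2) * S2 := mul_le_mul_of_nonneg_right hcondA hS2nn
        _ ≤ (Real.sqrt T * C2 / Real.sqrt eta) * G + (1/2) * S2 := by
            nlinarith [mul_nonneg coeff_nn hG]
    · -- away from the terminal time
      push_neg at hcase
      set m : ℝ := t + eta with hmdef
      have hm1 : t < m := by rw [hmdef]; linarith
      have hm2 : m < T := by rw [hmdef]; linarith
      have hd2 : (0:ℝ) < delta / 2 := by linarith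
      have hb1 : (∫ s in Ioc t m, g2 s / Real.sqrt (s - t))
          ≤ (S2 / Real.sqrt (delta / 2)) * (2 * Real.sqrt eta) := by
        have hball : ∀ s ∈ Ioc t m, g2 s ≤ S2 / Real.sqrt (delta / 2) := by
          intro s hs
          have hsm : s ≤ t + eta := hmdef ▸ hs.2
          refine hg2div s ⟨ht.1.trans hs.1.le, hs.2.trans hm2.le⟩ _
            (Real.sqrt_pos.2 hd2) (Real.sqrt_le_sqrt (by linarith))
        have h' := hpiece1 m (S2 / Real.sqrt (delta / 2)) hm1 hm2.le (by positivity) hball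
        rwa [hmdef, add_sub_cancel_left] at h'
      have hb2 : (∫ s in Ioc m T, g2 s / Real.sqrt (s - t)) ≤ (1 / Real.sqrt eta) * G := by
        have hse : 0 < Real.sqrt eta := Real.sqrt_pos.2 heta
        calc (∫ s in Ioc m T, g2 s / Real.sqrt (s - t))
            ≤ ∫ s in Ioc m T, g2 s * (1 / Real.sqrt eta) := by
              refine setIntegral_mono_on (hInt.mono_set (Ioc_subset_Ioc_left hm1.le))
                ((int_g2.mono_set (fun s hs => ⟨ht.1.trans (hm1.le.trans hs.1.le), hs.2⟩)).mul_const _)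
                measurableSet_Ioc ?_
              intro s hs
              have h1 : Real.sqrt eta ≤ Real.sqrt (s - t) := by
                refine Real.sqrt_le_sqrt ?_
                have hms : m < s := hs.1
                rw [hmdef] at hms
                linarith
              rw [mul_one_div]
              exact div_le_div_of_nonneg_left
                (nn2 s ⟨ht.1.trans (hm1.le.trans hs.1.le), hs.2⟩) hse h1
          _ = (∫ s in Ioc m T, g2 s) * (1 / Real.sqrt eta) := by rw [integral_mul_const]
          _ ≤ G * (1 / Real.sqrt eta) := by
              refine mul_le_mul_of_nonneg_right ?_ (by positivity)
              refine setIntegral_mono_set int_g2 ?_ ?_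
              · filter_upwards [ae_restrict_mem measurableSet_Icc] with s hs using nn2 s hs
              · exact HasSubset.Subset.eventuallyLE
                  (fun s hs => ⟨ht.1.trans (hm1.le.trans hs.1.le), hs.2⟩)
          _ = (1 / Real.sqrt eta) * G := mul_comm _ _
      have hsd : Real.sqrt (T - t) ≤ Real.sqrt T := Real.sqrt_le_sqrt (by linarith [ht.1])
      have hIb : I ≤ (S2 / Real.sqrt (delta / 2)) * (2 * Real.sqrt eta) + (1 / Real.sqrt eta) * G := by
        rw [hsplit m hm1 hm2]; exact add_le_add hb1 hb2
      have hrw2 : Real.sqrt (delta / 2) = Real.sqrt delta / Real.sqrt 2 := by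
        rw [Real.sqrt_div hdelta.le]
      have hsd0 : (0:ℝ) < Real.sqrt delta := Real.sqrt_pos.2 hdelta
      have hs2 : (0:ℝ) < Real.sqrt 2 := by positivity
      calc Real.sqrt (T - t) * (C2 * I) ≤ Real.sqrt T * (C2 * I) := by
            refine mul_le_mul_of_nonneg_right hsd ?_
            positivity
        _ ≤ Real.sqrt T * (C2 * ((S2 / Real.sqrt (delta / 2)) * (2 * Real.sqrt eta)
              + (1 / Real.sqrt eta) * G)) := by
            refine mul_le_mul_of_nonneg_left (mul_le_mul_of_nonneg_left hIb hC2)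
              (Real.sqrt_nonneg _)
        _ = (C2 * Real.sqrt T * (Real.sqrt 2 / Real.sqrt delta) * (2 * Real.sqrt eta)) * S2
              + (Real.sqrt T * C2 / Real.sqrt eta) * G := by
            rw [hrw2]
            field_simp
        _ ≤ (1/2) * S2 + (Real.sqrt T * C2 / Real.sqrt eta) * G := by
            exact add_le_add_left (mul_le_mul_of_nonneg_right hcondB hS2nn) _
        _ = (Real.sqrt T * C2 / Real.sqrt eta) * G + (1/2) * S2 := by ring
  -- conclude
  have hTt : 0 < Real.sqrt (T - t) := Real.sqrt_pos.2 (by linarith)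
  calc Real.sqrt (T - t) * g1 t
      ≤ Real.sqrt (T - t) * (C1 / Real.sqrt (T - t) + C2 * I) :=
        mul_le_mul_of_nonneg_left h (Real.sqrt_nonneg _)
    _ = C1 + Real.sqrt (T - t) * (C2 * I) := by
        rw [mul_add, mul_comm (Real.sqrt (T - t)) (C1 / Real.sqrt (T - t)),
          div_mul_cancel₀ _ hTt.ne']
    _ ≤ C1 + ((Real.sqrt T * C2 / Real.sqrt eta) * G + (1/2) * S2) := by linarith [key]
    _ = C1 + (Real.sqrt T * C2 / Real.sqrt eta) * G + (1/2) * S2 := by ring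


set_option maxHeartbeats 2000000 in
/-- Singular Gronwall lemma allowing a blow-up `C₁/√(T−t)` at the terminal
time: if `g₁(t) ≤ C₁/√(T−t) + C₂ ∫_t^T g₂(s)/√(s−t) ds` on `[0,T)` then, for constants
`λ, μ > 0` depending only on `C₂` and `T`,
`∫_0^T g₁ e^{λt} ≤ μ C₁ + ½ ∫_0^T g₂ e^{λt}` and
`sup √(T−t) g₁(t) ≤ μ C₁ + μ ∫_0^T g₂ + ½ sup √(T−t) g₂(t)`; if `g₁ = g₂` then
`sup √(T−t) g₁(t) ≤ μ' C₁`. -/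
theorem stmt2 (T : ℝ) (hT : 0 < T) (C2 : ℝ) (hC2 : 0 ≤ C2) :
    (∃ lam mu : ℝ, 0 < lam ∧ 0 < mu ∧
      ∀ (g1 g2 : ℝ → ℝ) (C1 : ℝ), 0 ≤ C1 →
        Measurable g1 → Measurable g2 →
        (∀ t ∈ Icc (0:ℝ) T, 0 ≤ g1 t) → (∀ t ∈ Icc (0:ℝ) T, 0 ≤ g2 t) →
        (∃ M, ∀ t ∈ Icc (0:ℝ) T, g1 t ≤ M) → (∃ M, ∀ t ∈ Icc (0:ℝ) T, g2 t ≤ M) →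
        (∀ t ∈ Ico (0:ℝ) T,
          g1 t ≤ C1 / Real.sqrt (T - t) + C2 * ∫ s in Ioc t T, g2 s / Real.sqrt (s - t)) →
        ((∫ t in Icc (0:ℝ) T, g1 t * Real.exp (lam * t))
            ≤ mu * C1 + (1/2) * ∫ t in Icc (0:ℝ) T, g2 t * Real.exp (lam * t)) ∧
        ((⨆ t : Icc (0:ℝ) T, Real.sqrt (T - t) * g1 t)
            ≤ mu * C1 + mu * (∫ t in Icc (0:ℝ) T, g2 t)
              + (1/2) * ⨆ t : Icc (0:ℝ) T, Real.sqrt (T - t) * g2 t)) ∧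
    (∃ mu' : ℝ, 0 < mu' ∧
      ∀ (g1 : ℝ → ℝ) (C1 : ℝ), 0 ≤ C1 →
        Measurable g1 →
        (∀ t ∈ Icc (0:ℝ) T, 0 ≤ g1 t) →
        (∃ M, ∀ t ∈ Icc (0:ℝ) T, g1 t ≤ M) →
        (∀ t ∈ Ico (0:ℝ) T,
          g1 t ≤ C1 / Real.sqrt (T - t) + C2 * ∫ s in Ioc t T, g1 s / Real.sqrt (s - t)) →
        (⨆ t : Icc (0:ℝ) T, Real.sqrt (T - t) * g1 t) ≤ mu' * C1) := by
  -- constants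
  set Cb : ℝ := max C2 1 with hCbdef
  have hCb1 : (1:ℝ) ≤ Cb := le_max_right _ _
  have hCbC2 : C2 ≤ Cb := le_max_left _ _
  have hCb0 : (0:ℝ) < Cb := lt_of_lt_of_le one_pos hCb1
  set lam : ℝ := 36 * Cb ^ 2 with hlamdef
  have hlam1 : (1:ℝ) ≤ lam := by nlinarith
  have hsqlam : Real.sqrt lam = 6 * Cb := by
    rw [hlamdef, show 36 * Cb ^ 2 = (6 * Cb) ^ 2 by ring]
    exact Real.sqrt_sq (by positivity)
  have hhalf : C2 * (3 / Real.sqrt lam) ≤ 1/2 := by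
    rw [hsqlam, mul_div_assoc', div_le_iff₀ (by positivity)]
    nlinarith
  set d0 : ℝ := min (Real.sqrt T) (1 / (8 * Cb)) with hd0def
  have hd0pos : 0 < d0 := lt_min (Real.sqrt_pos.2 hT) (by positivity)
  set delta : ℝ := d0 ^ 2 with hdeltadef
  have hdelta : 0 < delta := by positivity
  have hsqdelta : Real.sqrt delta = d0 := Real.sqrt_sq hd0pos.le
  have hdT : delta ≤ T := by
    have h1 : d0 ≤ Real.sqrt T := min_le_left _ _
    calc delta = d0 ^ 2 := hdeltadef
      _ ≤ Real.sqrt T ^ 2 := by nlinarith [hd0pos.le]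
      _ = T := Real.sq_sqrt hT.le
  have hcondA : 4 * C2 * Real.sqrt delta ≤ 1/2 := by
    rw [hsqdelta]
    have h1 : d0 ≤ 1 / (8 * Cb) := min_le_right _ _
    have h2 : 4 * C2 * d0 ≤ 4 * Cb * (1 / (8 * Cb)) := by
      apply mul_le_mul (by nlinarith) h1 hd0pos.le (by positivity)
    calc 4 * C2 * d0 ≤ 4 * Cb * (1 / (8 * Cb)) := h2
      _ = 1/2 := by field_simp; ring
  set e0 : ℝ := min (Real.sqrt (delta / 2))
    (Real.sqrt delta / (4 * Real.sqrt 2 * Real.sqrt T * Cb)) with he0def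
  have he0pos : 0 < e0 := lt_min (Real.sqrt_pos.2 (by linarith)) (by positivity)
  set eta : ℝ := e0 ^ 2 with hetadef
  have heta : 0 < eta := by positivity
  have hsqeta : Real.sqrt eta = e0 := Real.sqrt_sq he0pos.le
  have hetad : 2 * eta ≤ delta := by
    have h1 : e0 ≤ Real.sqrt (delta / 2) := min_le_left _ _
    have h2 : eta ≤ delta / 2 := by
      calc eta = e0 ^ 2 := hetadef
        _ ≤ Real.sqrt (delta / 2) ^ 2 := by nlinarith [he0pos.le]
        _ = delta / 2 := Real.sq_sqrt (by linarith)
    linarith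
  have hsT : 0 < Real.sqrt T := Real.sqrt_pos.2 hT
  have hs2 : 0 < Real.sqrt 2 := by positivity
  have hcondB : C2 * Real.sqrt T * (Real.sqrt 2 / Real.sqrt delta) * (2 * Real.sqrt eta)
      ≤ 1/2 := by
    rw [hsqeta]
    have h1 : e0 ≤ Real.sqrt delta / (4 * Real.sqrt 2 * Real.sqrt T * Cb) := min_le_right _ _
    have hsd : 0 < Real.sqrt delta := Real.sqrt_pos.2 hdelta
    have key : C2 * Real.sqrt T * (Real.sqrt 2 / Real.sqrt delta) *
        (2 * (Real.sqrt delta / (4 * Real.sqrt 2 * Real.sqrt T * Cb))) = C2 / (2 * Cb) := by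
      field_simp
      ring
    calc C2 * Real.sqrt T * (Real.sqrt 2 / Real.sqrt delta) * (2 * e0)
        ≤ C2 * Real.sqrt T * (Real.sqrt 2 / Real.sqrt delta) *
            (2 * (Real.sqrt delta / (4 * Real.sqrt 2 * Real.sqrt T * Cb))) := by
          apply mul_le_mul_of_nonneg_left (by linarith) (by positivity)
      _ = C2 / (2 * Cb) := key
      _ ≤ 1/2 := by
          rw [div_le_div_iff₀ (by positivity) (by norm_num)]
          linarith
  set mu : ℝ := Real.exp (lam * T) * (2 * Real.sqrt T) + 1 + Real.sqrt T * Cb / e0 with hmudef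
  have hmu : 0 < mu := by positivity
  have hlampos : 0 < lam := by positivity
  have hmu1 : 1 ≤ mu := by
    have : 0 ≤ Real.exp (lam * T) * (2 * Real.sqrt T) := by positivity
    have : 0 ≤ Real.sqrt T * Cb / e0 := by positivity
    rw [hmudef]; linarith
  have hmuA : Real.exp (lam * T) * (2 * Real.sqrt T) ≤ mu := by
    have : 0 ≤ Real.sqrt T * Cb / e0 := by positivity
    rw [hmudef]; linarith
  have hmuB : Real.sqrt T * C2 / Real.sqrt eta ≤ mu := by
    rw [hsqeta]
    have h1 : Real.sqrt T * C2 / e0 ≤ Real.sqrt T * Cb / e0 :=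
      (div_le_div_iff_of_pos_right he0pos).2 (by nlinarith [hsT.le])
    have : 0 ≤ Real.exp (lam * T) * (2 * Real.sqrt T) := by positivity
    rw [hmudef]; linarith
  clear_value Cb lam d0 delta e0 eta mu
  -- the main combined statement
  have main : ∀ (g1 g2 : ℝ → ℝ) (C1 : ℝ), 0 ≤ C1 →
      Measurable g1 → Measurable g2 →
      (∀ t ∈ Icc (0:ℝ) T, 0 ≤ g1 t) → (∀ t ∈ Icc (0:ℝ) T, 0 ≤ g2 t) →
      (∃ M, ∀ t ∈ Icc (0:ℝ) T, g1 t ≤ M) → (∃ M, ∀ t ∈ Icc (0:ℝ) T, g2 t ≤ M) →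
      (∀ t ∈ Ico (0:ℝ) T,
        g1 t ≤ C1 / Real.sqrt (T - t) + C2 * ∫ s in Ioc t T, g2 s / Real.sqrt (s - t)) →
      ((∫ t in Icc (0:ℝ) T, g1 t * Real.exp (lam * t))
          ≤ mu * C1 + (1/2) * ∫ t in Icc (0:ℝ) T, g2 t * Real.exp (lam * t)) ∧
      ((⨆ t : Icc (0:ℝ) T, Real.sqrt (T - t) * g1 t)
          ≤ mu * C1 + mu * (∫ t in Icc (0:ℝ) T, g2 t)
            + (1/2) * ⨆ t : Icc (0:ℝ) T, Real.sqrt (T - t) * g2 t) := by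
    intro g1 g2 C1 hC1 mg1 mg2 nn1 nn2 ⟨M1, hM1⟩ ⟨M2, hM2⟩ hyp
    constructor
    · have h := part1 T hT C2 hC2 lam hlam1 hhalf g1 g2 C1 hC1 mg1 mg2 nn1 nn2 M1 hM1 M2 hM2 hyp
      have hX2 : 0 ≤ ∫ t in Icc (0:ℝ) T, g2 t * Real.exp (lam * t) :=
        setIntegral_nonneg measurableSet_Icc
          (fun t ht => mul_nonneg (nn2 t ht) (Real.exp_pos _).le)
      linarith [mul_le_mul_of_nonneg_right hmuA hC1]
    · have h := part2 T hT C2 hC2 delta eta hdelta hdT heta hetad hcondA hcondB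
        g1 g2 C1 hC1 mg1 mg2 nn1 nn2 M2 hM2 hyp
      have hG : 0 ≤ ∫ t in Icc (0:ℝ) T, g2 t :=
        setIntegral_nonneg measurableSet_Icc nn2
      linarith [mul_le_mul_of_nonneg_right hmuB hG,
        mul_le_mul_of_nonneg_right hmu1 hC1]
  refine ⟨⟨lam, mu, hlampos, hmu, main⟩, ⟨2 * mu + 4 * mu ^ 2, by positivity, ?_⟩⟩
  intro g1 C1 hC1 mg1 nn1 hMex hyp
  obtain ⟨M1, hM1⟩ := hMex
  obtain ⟨hpart1, hpart2⟩ := main g1 g1 C1 hC1 mg1 mg1 nn1 nn1 ⟨M1, hM1⟩ ⟨M1, hM1⟩ hyp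
  -- X := weighted integral; from part1 : X ≤ mu C1 + X/2 so X ≤ 2 mu C1
  set X : ℝ := ∫ t in Icc (0:ℝ) T, g1 t * Real.exp (lam * t) with hXdef
  clear_value X
  have hX : X ≤ 2 * mu * C1 := by linarith
  -- G ≤ X
  have habs1 : ∀ t ∈ Icc (0:ℝ) T, |g1 t| ≤ M1 := fun t ht => by
    rw [abs_of_nonneg (nn1 t ht)]; exact hM1 t ht
  have hvol : volume (Icc (0:ℝ) T) ≠ ⊤ := measure_Icc_lt_top.ne
  have hM1nn : 0 ≤ M1 := le_trans (nn1 0 ⟨le_refl 0, hT.le⟩) (hM1 0 ⟨le_refl 0, hT.le⟩)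
  have int_g1 : IntegrableOn g1 (Icc (0:ℝ) T) := intOn_bdd mg1 measurableSet_Icc hvol habs1
  have me1 : Measurable fun t => g1 t * Real.exp (lam * t) :=
    mg1.mul (Real.measurable_exp.comp (measurable_id.const_mul lam))
  have int_g1e : IntegrableOn (fun t => g1 t * Real.exp (lam * t)) (Icc (0:ℝ) T) := by
    refine intOn_bdd me1 measurableSet_Icc hvol (M := M1 * Real.exp (lam * T)) ?_
    intro t ht
    rw [abs_mul, abs_of_nonneg (Real.exp_pos _).le]
    exact mul_le_mul (habs1 t ht) (Real.exp_le_exp.2 (by nlinarith [ht.2, hlam1])) (Real.exp_pos _).le hM1nn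
  have hGX : (∫ t in Icc (0:ℝ) T, g1 t) ≤ X := by
    rw [hXdef]
    refine setIntegral_mono_on int_g1 int_g1e measurableSet_Icc ?_
    intro t ht
    exact le_mul_of_one_le_right (nn1 t ht) (Real.one_le_exp (by nlinarith [ht.1, hlam1]))
  have hG : 0 ≤ ∫ t in Icc (0:ℝ) T, g1 t := setIntegral_nonneg measurableSet_Icc nn1
  have hfin1 : mu * (∫ t in Icc (0:ℝ) T, g1 t) ≤ mu * (2 * mu * C1) :=
    mul_le_mul_of_nonneg_left (hGX.trans hX) hmu.le
  have hfin2 : mu * (2 * mu * C1) = 2 * mu ^ 2 * C1 := by ring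
  linarith [hpart2]
end
end

section
/- For every ε > 0 there exists a natural number n such that for all t ∈ (0,T], the integral ∫_t^{(t+ε)∧T} √(T−t) / (√(s−t)·√(T−s)) ds ≤ T^{1/2} ∫_0^{1∧ε^{1/2}} s^{−1/2}(1−s)^{−1/2} ds whenever ε^{1/2} ≤ T−t, and ∫_t^{(t+ε)∧T} √(T−t)/(√(s−t)·√(T−s)) ds ≤ ε^{1/4} ∫_0^1 s^{−1/2}(1−s)^{−1/2} ds whenever T−t ≤ ε^{1/2}. Consequently there exists a function δ : ℝ₊ → ℝ₊ with δ(ε) → 0 as ε → 0 such that ∫_t^{(t+ε)∧T} √(T−t)/(√(s−t)·√(T−s)) ds ≤ δ(ε) for all t ∈ [0,T). -/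
open MeasureTheory Set

noncomputable section

/-- The model singular kernel `u ↦ u^{-1/2} (1-u)^{-1/2}` (with the junk-value
convention `1/0 = 0` outside `(0,1)`). -/
def G (u : ℝ) : ℝ := 1 / (Real.sqrt u * Real.sqrt (1 - u))

lemma G_meas : Measurable G :=
  measurable_const.div ((Real.continuous_sqrt.measurable).mul
    ((Real.continuous_sqrt.comp (continuous_const.sub continuous_id)).measurable))

lemma G_nonneg (u : ℝ) : 0 ≤ G u := by
  unfold G; positivity

lemma sqrt_half_inv : (Real.sqrt (1/2 : ℝ))⁻¹ = Real.sqrt 2 := by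
  rw [one_div, Real.sqrt_inv, inv_inv]

lemma G_int : IntegrableOn G (Ioc (0:ℝ) 1) := by
  have h01 : Ioc (0:ℝ) 1 = Ioc 0 (1/2) ∪ Ioc (1/2) 1 := by
    rw [Ioc_union_Ioc_eq_Ioc] <;> norm_num
  rw [h01]
  apply IntegrableOn.union
  · have hi : IntegrableOn (fun x : ℝ => Real.sqrt 2 * x ^ (-(1/2) : ℝ)) (Ioc 0 (1/2:ℝ)) := by
      have := intervalIntegral.intervalIntegrable_rpow' (a := (0:ℝ)) (b := 1/2)
        (r := -(1/2)) (by norm_num)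
      rw [intervalIntegrable_iff_integrableOn_Ioc_of_le (by norm_num)] at this
      exact this.const_mul _
    refine Integrable.mono hi (G_meas.aestronglyMeasurable.restrict) ?_
    filter_upwards [ae_restrict_mem measurableSet_Ioc] with u hu
    obtain ⟨hu0, hu2⟩ := hu
    have h1u : (1:ℝ)/2 ≤ 1 - u := by linarith
    have hs2 : Real.sqrt (1/2) ≤ Real.sqrt (1 - u) := Real.sqrt_le_sqrt h1u
    have hs2' : (0:ℝ) < Real.sqrt (1/2) := Real.sqrt_pos.2 (by norm_num)
    rw [Real.norm_eq_abs, Real.norm_eq_abs, abs_of_nonneg (G_nonneg u),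
      abs_of_nonneg (by positivity)]
    have h2 : (Real.sqrt (1 - u))⁻¹ ≤ Real.sqrt 2 := by
      rw [← sqrt_half_inv]
      exact inv_anti₀ hs2' hs2
    calc G u = (Real.sqrt (1-u))⁻¹ * (Real.sqrt u)⁻¹ := by
          unfold G; rw [one_div, mul_inv, mul_comm]
      _ ≤ Real.sqrt 2 * (Real.sqrt u)⁻¹ := by gcongr
      _ = Real.sqrt 2 * u ^ (-(1/2) : ℝ) := by
          rw [Real.rpow_neg hu0.le, ← Real.sqrt_eq_rpow]
  · have hi : IntegrableOn (fun x : ℝ => Real.sqrt 2 * (1-x) ^ (-(1/2) : ℝ)) (Ioc (1/2:ℝ) 1) := by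
      have := ((intervalIntegral.intervalIntegrable_rpow' (a := (0:ℝ)) (b := 1/2)
        (r := -(1/2)) (by norm_num)).comp_sub_left 1).symm
      norm_num at this
      rw [intervalIntegrable_iff_integrableOn_Ioc_of_le (by norm_num)] at this
      exact this.const_mul _
    refine Integrable.mono hi (G_meas.aestronglyMeasurable.restrict) ?_
    filter_upwards [ae_restrict_mem measurableSet_Ioc] with u hu
    obtain ⟨hu0, hu2⟩ := hu
    have hs2 : Real.sqrt (1/2) ≤ Real.sqrt u := Real.sqrt_le_sqrt hu0.le
    have hs2' : (0:ℝ) < Real.sqrt (1/2) := Real.sqrt_pos.2 (by norm_num)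
    rw [Real.norm_eq_abs, Real.norm_eq_abs, abs_of_nonneg (G_nonneg u),
      abs_of_nonneg (mul_nonneg (Real.sqrt_nonneg _) (Real.rpow_nonneg (by linarith) _))]
    have h2 : (Real.sqrt u)⁻¹ ≤ Real.sqrt 2 := by
      rw [← sqrt_half_inv]
      exact inv_anti₀ hs2' hs2
    calc G u = (Real.sqrt u)⁻¹ * (Real.sqrt (1-u))⁻¹ := by
          unfold G; rw [one_div, mul_inv]
      _ ≤ Real.sqrt 2 * (Real.sqrt (1-u))⁻¹ := by gcongr
      _ = Real.sqrt 2 * (1-u) ^ (-(1/2) : ℝ) := by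
          rw [Real.rpow_neg (by linarith), ← Real.sqrt_eq_rpow]

lemma G_mono {c d : ℝ} (hcd : c ≤ d) (hd : d ≤ 1) :
    ∫ u in Ioc (0:ℝ) c, G u ≤ ∫ u in Ioc (0:ℝ) d, G u := by
  refine setIntegral_mono_set (G_int.mono_set (Ioc_subset_Ioc_right hd))
    (Filter.Eventually.of_forall G_nonneg)
    ((Ioc_subset_Ioc_right hcd).eventuallyLE)

lemma G_integral_nonneg (c : ℝ) : 0 ≤ ∫ u in Ioc (0:ℝ) c, G u :=
  setIntegral_nonneg measurableSet_Ioc fun x _ => G_nonneg x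

lemma quarter (ε : ℝ) (hε : 0 < ε) : Real.sqrt (Real.sqrt ε) = ε ^ ((1:ℝ)/4) := by
  rw [Real.sqrt_eq_rpow, Real.sqrt_eq_rpow, ← Real.rpow_mul hε.le]
  norm_num

lemma G_prim_cont : ContinuousOn (fun x => ∫ u in Ioc (0:ℝ) x, G u) (Icc (0:ℝ) 1) := by
  apply intervalIntegral.continuousOn_primitive
  exact (integrableOn_Icc_iff_integrableOn_Ioc).2 G_int

/-- The change-of-variables identity `s = t + (T-t) u`. -/
lemma subst (T t ε : ℝ) (htT : t < T) (hε : 0 < ε) :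
    (∫ s in Ioc t (min (t + ε) T),
        Real.sqrt (T - t) / (Real.sqrt (s - t) * Real.sqrt (T - s)))
      = Real.sqrt (T - t) * ∫ u in Ioc (0:ℝ) (min (ε / (T - t)) 1), G u := by
  set a := T - t with ha_def
  have ha : 0 < a := by simp [ha_def]; linarith
  have hsa : 0 < Real.sqrt a := Real.sqrt_pos.2 ha
  set m := min (t + ε) T with hm_def
  have htm : t ≤ m := le_min (by linarith) htT.le
  have hmT : m ≤ T := min_le_right _ _
  have hcong : ∀ s ∈ Ioc t m,
      Real.sqrt (T - t) / (Real.sqrt (s - t) * Real.sqrt (T - s))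
        = (Real.sqrt a)⁻¹ * G (s / a - t / a) := by
    intro s hs
    obtain ⟨hs1, hs2⟩ := hs
    have hst : 0 < s - t := by linarith
    have hTs : 0 ≤ T - s := by have := hs2.trans hmT; linarith
    unfold G
    rw [show s / a - t / a = (s - t) / a by ring]
    rw [show (1 : ℝ) - (s - t) / a = (T - s) / a by field_simp; ring]
    rw [Real.sqrt_div hst.le, Real.sqrt_div hTs]
    have h : Real.sqrt a * Real.sqrt a = a := Real.mul_self_sqrt ha.le
    rw [div_mul_div_comm, h, one_div, ← div_eq_mul_inv]
    rw [div_div_eq_mul_div, inv_mul_eq_div, Real.div_sqrt]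
  rw [setIntegral_congr_fun measurableSet_Ioc hcong, integral_const_mul,
    ← intervalIntegral.integral_of_le htm,
    intervalIntegral.integral_comp_div_sub G ha.ne' (t / a)]
  have h0 : t / a - t / a = 0 := by ring
  have he : m / a - t / a = min (ε / a) 1 := by
    rcases le_total (t + ε) T with h | h
    · have hm : m = t + ε := min_eq_left h
      have : ε / a ≤ 1 := (div_le_one ha).2 (by linarith)
      rw [hm, min_eq_left this]; field_simp; ring
    · have hm : m = T := min_eq_right h
      have : (1:ℝ) ≤ ε / a := (one_le_div ha).2 (by linarith)
      rw [hm, min_eq_right this]; field_simp; rw [ha_def]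
  rw [h0, he, intervalIntegral.integral_of_le (le_min (by positivity) zero_le_one),
    smul_eq_mul, ← mul_assoc, inv_mul_eq_div, Real.div_sqrt]

/-- The two key bounds, for `0 ≤ t < T`. -/
lemma key (T t ε : ℝ) (ht0 : 0 ≤ t) (htT : t < T) (hε : 0 < ε) :
    (Real.sqrt ε ≤ T - t →
      (∫ s in Ioc t (min (t + ε) T),
          Real.sqrt (T - t) / (Real.sqrt (s - t) * Real.sqrt (T - s)))
        ≤ Real.sqrt T * ∫ u in Ioc (0:ℝ) (min 1 (Real.sqrt ε)), G u) ∧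
    (T - t ≤ Real.sqrt ε →
      (∫ s in Ioc t (min (t + ε) T),
          Real.sqrt (T - t) / (Real.sqrt (s - t) * Real.sqrt (T - s)))
        ≤ ε ^ ((1:ℝ)/4) * ∫ u in Ioc (0:ℝ) 1, G u) := by
  rw [subst T t ε htT hε]
  have ha : 0 < T - t := by linarith
  have hc1 : min (ε / (T - t)) 1 ≤ 1 := min_le_right _ _
  constructor
  · intro h
    have hsε : 0 < Real.sqrt ε := Real.sqrt_pos.2 hε
    have h1 : ε / (T - t) ≤ Real.sqrt ε := by
      calc ε / (T - t) ≤ ε / Real.sqrt ε := by gcongr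
        _ = Real.sqrt ε := Real.div_sqrt
    have hmin : min (ε / (T - t)) 1 ≤ min 1 (Real.sqrt ε) :=
      le_min hc1 ((min_le_left _ _).trans h1)
    exact mul_le_mul (Real.sqrt_le_sqrt (by linarith)) (G_mono hmin (min_le_left _ _))
      (G_integral_nonneg _) (Real.sqrt_nonneg _)
  · intro h
    have hq : Real.sqrt (T - t) ≤ ε ^ ((1:ℝ)/4) := by
      rw [← quarter ε hε]; exact Real.sqrt_le_sqrt h
    exact mul_le_mul hq (G_mono hc1 le_rfl) (G_integral_nonneg _) (Real.rpow_nonneg hε.le _)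

/-- The key estimate for the singular Gronwall lemma: for `t ∈ (0,T]`,
`∫_t^{(t+ε)∧T} √(T−t)/(√(s−t)√(T−s)) ds` is bounded by
`√T ∫_0^{1∧√ε} s^{-1/2}(1−s)^{-1/2} ds` when `√ε ≤ T−t`, and by
`ε^{1/4} ∫_0^1 s^{-1/2}(1−s)^{-1/2} ds` when `T−t ≤ √ε`; consequently there is
`δ : ℝ₊ → ℝ₊` with `δ(ε) → 0` as `ε → 0⁺` bounding the integral for all `t ∈ [0,T)`. -/
theorem stmt3 (T : ℝ) (hT : 0 < T) :
    (∀ ε : ℝ, 0 < ε → ∀ t ∈ Ioc (0:ℝ) T,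
      ((Real.sqrt ε ≤ T - t →
        (∫ s in Ioc t (min (t + ε) T),
            Real.sqrt (T - t) / (Real.sqrt (s - t) * Real.sqrt (T - s)))
          ≤ Real.sqrt T *
            ∫ s in Ioc (0:ℝ) (min 1 (Real.sqrt ε)), 1 / (Real.sqrt s * Real.sqrt (1 - s))) ∧
      (T - t ≤ Real.sqrt ε →
        (∫ s in Ioc t (min (t + ε) T),
            Real.sqrt (T - t) / (Real.sqrt (s - t) * Real.sqrt (T - s)))
          ≤ ε ^ ((1:ℝ)/4) *
            ∫ s in Ioc (0:ℝ) 1, 1 / (Real.sqrt s * Real.sqrt (1 - s))))) ∧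
    (∃ δ : ℝ → ℝ, (∀ ε, 0 ≤ δ ε) ∧
      Filter.Tendsto δ (nhdsWithin 0 (Ioi 0)) (nhds 0) ∧
      ∀ ε : ℝ, 0 < ε → ∀ t ∈ Ico (0:ℝ) T,
        (∫ s in Ioc t (min (t + ε) T),
            Real.sqrt (T - t) / (Real.sqrt (s - t) * Real.sqrt (T - s))) ≤ δ ε) := by
  have hGlam : ∀ c : ℝ,
      (∫ s in Ioc (0:ℝ) c, 1 / (Real.sqrt s * Real.sqrt (1 - s))) = ∫ u in Ioc (0:ℝ) c, G u :=
    fun _ => rfl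
  constructor
  · intro ε hε t ht
    obtain ⟨ht0, htT⟩ := ht
    rcases eq_or_lt_of_le htT with rfl | htT'
    · -- t = T : the integral is zero
      have hempty : Ioc t (min (t + ε) t) = ∅ := by
        rw [min_eq_right (by linarith), Ioc_self]
      rw [hempty]
      simp only [Measure.restrict_empty, integral_zero_measure]
      constructor
      · intro _
        exact mul_nonneg (Real.sqrt_nonneg _)
          (setIntegral_nonneg measurableSet_Ioc fun x _ => G_nonneg x)
      · intro _
        exact mul_nonneg (Real.rpow_nonneg hε.le _)
          (setIntegral_nonneg measurableSet_Ioc fun x _ => G_nonneg x)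
    · rw [hGlam, hGlam]
      exact key T t ε ht0.le htT' hε
  · refine ⟨fun ε => Real.sqrt T * (∫ u in Ioc (0:ℝ) (min 1 (Real.sqrt (min ε 1))), G u)
      + |ε| ^ ((1:ℝ)/4) * ∫ u in Ioc (0:ℝ) 1, G u, ?_, ?_, ?_⟩
    · intro ε
      have h1 : 0 ≤ Real.sqrt T * ∫ u in Ioc (0:ℝ) (min 1 (Real.sqrt (min ε 1))), G u :=
        mul_nonneg (Real.sqrt_nonneg _) (G_integral_nonneg _)
      have h2 : 0 ≤ |ε| ^ ((1:ℝ)/4) * ∫ u in Ioc (0:ℝ) 1, G u :=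
        mul_nonneg (Real.rpow_nonneg (abs_nonneg _) _) (G_integral_nonneg _)
      linarith
    · -- tendsto 0
      have hφcont : Continuous (fun ε : ℝ => min 1 (Real.sqrt (min ε 1))) :=
        continuous_const.min (Real.continuous_sqrt.comp (continuous_id.min continuous_const))
      have hφ0 : min 1 (Real.sqrt (min (0:ℝ) 1)) = 0 := by
        rw [min_eq_left zero_le_one, Real.sqrt_zero, min_eq_right zero_le_one]
      have hφmem : ∀ ε : ℝ, min 1 (Real.sqrt (min ε 1)) ∈ Icc (0:ℝ) 1 :=
        fun ε => ⟨le_min zero_le_one (Real.sqrt_nonneg _), min_le_left _ _⟩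
      have hφtend : Filter.Tendsto (fun ε : ℝ => min 1 (Real.sqrt (min ε 1)))
          (nhds 0) (nhdsWithin 0 (Icc (0:ℝ) 1)) := by
        rw [tendsto_nhdsWithin_iff]
        refine ⟨?_, Filter.Eventually.of_forall hφmem⟩
        have := hφcont.continuousAt (x := (0:ℝ))
        rwa [ContinuousAt, hφ0] at this
      have hF0 : (∫ u in Ioc (0:ℝ) (0:ℝ), G u) = 0 := by
        rw [Ioc_self]
        simp
      have h1 : Filter.Tendsto
          (fun ε : ℝ => ∫ u in Ioc (0:ℝ) (min 1 (Real.sqrt (min ε 1))), G u)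
          (nhds 0) (nhds 0) := by
        have := (G_prim_cont 0 ⟨le_rfl, zero_le_one⟩).tendsto.comp hφtend
        rwa [hF0] at this
      have h2 : Filter.Tendsto (fun ε : ℝ => |ε| ^ ((1:ℝ)/4)) (nhds 0) (nhds 0) := by
        have hc : ContinuousAt (fun x : ℝ => x ^ ((1:ℝ)/4)) |(0:ℝ)| := by
          simpa using Real.continuousAt_rpow_const 0 ((1:ℝ)/4) (Or.inr (by norm_num))
        have hcomp : ContinuousAt (fun ε : ℝ => |ε| ^ ((1:ℝ)/4)) 0 :=
          ContinuousAt.comp hc (continuous_abs.continuousAt)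
        have := hcomp.tendsto
        simpa [Real.zero_rpow] using this
      have := ((tendsto_const_nhds (x := Real.sqrt T)).mul h1).add
        (h2.mul (tendsto_const_nhds (x := ∫ u in Ioc (0:ℝ) 1, G u)))
      simp only [mul_zero, zero_mul, add_zero] at this
      exact this.mono_left nhdsWithin_le_nhds
    · intro ε hε t ht
      obtain ⟨ht0, htT⟩ := ht
      have hmineq : min 1 (Real.sqrt (min ε 1)) = min 1 (Real.sqrt ε) := by
        rcases le_total ε 1 with h | h
        · rw [min_eq_left h]
        · rw [min_eq_right h, Real.sqrt_one, min_self,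
            min_eq_left (Real.one_le_sqrt.2 h)]
      dsimp only
      rcases le_total (Real.sqrt ε) (T - t) with h | h
      · have := (key T t ε ht0 htT hε).1 h
        rw [hmineq]
        have h2 : 0 ≤ |ε| ^ ((1:ℝ)/4) * ∫ u in Ioc (0:ℝ) 1, G u :=
          mul_nonneg (Real.rpow_nonneg (abs_nonneg _) _) (G_integral_nonneg _)
        linarith
      · have := (key T t ε ht0 htT hε).2 h
        rw [abs_of_pos hε]
        have h1 : 0 ≤ Real.sqrt T * ∫ u in Ioc (0:ℝ) (min 1 (Real.sqrt (min ε 1))), G u :=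
          mul_nonneg (Real.sqrt_nonneg _) (G_integral_nonneg _)
        linarith
end
end

section
/- Let d = 1 and consider the planar ODE system d/dt m(t) = −y(t), d/dt y(t) = 0 on [0,T] with terminal condition y(T) = g(m(T)), where g : ℝ → ℝ is defined by g(x) = −x for |x| ≤ 1 and g(x) = −sign(x) for |x| ≥ 1. If T > 1 and m(0) = 0, then the forward-backward system admits at least three distinct solutions, given by (m(t), y(t)) = (0, 0), (m(t), y(t)) = (t, −1), and (m(t), y(t)) = (−t, 1) for t ∈ [0,T]. In particular uniqueness fails for this forward-backward ODE system. -/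
open Set

noncomputable section

/-- The terminal-condition function: `g(x) = −x` for `|x| ≤ 1`, `g(x) = −sign(x)` for `|x| ≥ 1`. -/
def burgersG (x : ℝ) : ℝ := if |x| ≤ 1 then -x else -Real.sign x

/-- `(m, y)` solves the forward-backward system `m' = −y`, `y' = 0` on `[0,T]` with `m 0 = 0`
and terminal condition `y T = g(m T)`. -/
def IsFBSol (T : ℝ) (m y : ℝ → ℝ) : Prop :=
  (∀ t ∈ Icc (0:ℝ) T, HasDerivAt m (-(y t)) t) ∧
  (∀ t ∈ Icc (0:ℝ) T, HasDerivAt y 0 t) ∧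
  m 0 = 0 ∧ y T = burgersG (m T)

/-- For `T > 1`, the forward-backward system `m' = −y`, `y' = 0`,
`m(0) = 0`, `y(T) = g(m(T))` admits the three distinct solutions `(0,0)`, `(t,−1)`, `(−t,1)`;
uniqueness fails. -/
theorem stmt14 (T : ℝ) (hT : 1 < T) :
    IsFBSol T (fun _ => 0) (fun _ => 0) ∧
    IsFBSol T (fun t => t) (fun _ => -1) ∧
    IsFBSol T (fun t => -t) (fun _ => 1) ∧
    (∃ t ∈ Icc (0:ℝ) T, (0:ℝ) ≠ t) ∧
    (∃ t ∈ Icc (0:ℝ) T, (0:ℝ) ≠ -t) ∧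
    (∃ t ∈ Icc (0:ℝ) T, t ≠ -t) := by

  have hT0 : (0:ℝ) < T := lt_trans one_pos hT
  have hnotle : ¬ |T| ≤ 1 := by
    rw [abs_of_pos hT0]; linarith
  refine ⟨⟨fun t _ => by simpa using hasDerivAt_const t (0:ℝ),
      fun t _ => hasDerivAt_const t 0, rfl, ?_⟩,
    ⟨fun t _ => by simpa using hasDerivAt_id' t,
      fun t _ => hasDerivAt_const t ((-1:ℝ)), rfl, ?_⟩,
    ⟨fun t _ => by simpa using hasDerivAt_neg' t,
      fun t _ => hasDerivAt_const t ((1:ℝ)), by simp, ?_⟩,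
    ⟨1, ⟨zero_le_one, hT.le⟩, one_ne_zero.symm⟩,
    ⟨1, ⟨zero_le_one, hT.le⟩, by norm_num⟩,
    ⟨1, ⟨zero_le_one, hT.le⟩, by norm_num⟩⟩
  · simp [burgersG]
  · simp only [burgersG, hnotle, if_false]
    rw [Real.sign_of_pos hT0]
  · have : ¬ |(-T)| ≤ 1 := by rwa [abs_neg]
    simp only [burgersG, this, if_false]
    rw [Real.sign_of_neg (by linarith : -T < 0)]
    norm_num
end
end

section
/- Fix N ∈ ℕ* and T > 0. Let Δ^{(N)} be the discrete Laplacian on step functions constant on intervals [k/N,(k+1)/N) of the torus (indices mod N). Suppose ϱ : [0,T] → L²(S¹;ℝ^d) takes values in such step functions and is supported at a single site: ϱ_s(x) = (v_s / A) · 1_{[k₀/N,(k₀+1)/N)}(x) for some measurable v : [0,T] → ℝ^d, some site k₀ and constant A > 0. Define (ii)_t = ∫_0^t e^{(t−s)Δ^{(N)}} ϱ_s ds. Then there exists a constant C, depending only on T (and not on N, A, k₀, or v), such that ∫_0^T sup_{x∈S¹} |Δ^{(N)} (ii)_t(x)| dt ≤ (C/A) ∫_0^T |v_s| ds. -/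
/-!
Testing against a norming functional of norm at most one reduces the estimate to complex scalar
data, and the discrete Fourier transform on `ℤ/Mℤ` diagonalises the cyclic Laplacian with
eigenvalues `λₙ = M² (2 - 2 cos (2πn/M)) ≥ 0`. The single-site source has Fourier coefficients of
modulus `‖w s‖`, so by Duhamel's formula the `n`-th mode of the solution is bounded by
`∫₀ᵗ e^{-λₙ(t-s)} ‖w s‖ ds`, and Fourier inversion gives
`sup_k ‖Δ u_t(k)‖ ≤ M⁻¹ ∑ₙ λₙ ∫₀ᵗ e^{-λₙ(t-s)} ‖w s‖ ds`.
By Fubini, `λ ∫₀ᵀ ∫₀ᵗ e^{-λ(t-s)} f(s) ds dt ≤ ∫₀ᵀ f`, so integrating in time and averaging over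
the `M` modes yields the estimate with `C = 1`, uniformly in `N`, `k₀`, `T` and the dimension.
-/

open MeasureTheory Set ZMod

noncomputable section

section CyclicLaplacian

variable {E : Type*} [AddCommGroup E] [Module ℝ E]

def cyclicLaplacian (M : ℕ) (c : ZMod M → E) : ZMod M → E :=
  fun k ↦ ((M : ℝ) ^ 2) • (c (k + 1) + c (k - 1) - (2 : ℝ) • c k)

-- `ZMod (N + 1)` is definitionally `Fin (N + 1)`, so this also applies to `Fin`-indexed families.
lemma cyclicLaplacian_succ_apply (N : ℕ) (c : ZMod (N + 1) → E) (k : ZMod (N + 1)) :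
    cyclicLaplacian (N + 1) c k = ((N : ℝ) + 1) ^ 2 • (c (k + 1) + c (k - 1) - (2 : ℝ) • c k) := by
  simp only [cyclicLaplacian, Nat.cast_succ]

lemma map_cyclicLaplacian {F : Type*} [AddCommGroup F] [Module ℝ F] (g : E →ₗ[ℝ] F) (M : ℕ)
    (c : ZMod M → E) (k : ZMod M) :
    g (cyclicLaplacian M c k) = cyclicLaplacian M (g ∘ c) k := by
  simp [cyclicLaplacian]

end CyclicLaplacian

section Fourier

variable {M : ℕ} [NeZero M]

def cyclicLaplacianEigenvalue (M : ℕ) [NeZero M] (n : ZMod M) : ℝ :=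
  (M : ℝ) ^ 2 * (2 - 2 * (stdAddChar n).re)

lemma cyclicLaplacianEigenvalue_nonneg (M : ℕ) [NeZero M] (n : ZMod M) :
    0 ≤ cyclicLaplacianEigenvalue M n := by
  have h : (stdAddChar n).re ≤ 1 := (Complex.re_le_norm _).trans_eq (AddChar.norm_apply _ _)
  exact mul_nonneg (sq_nonneg _) (by linarith)

section Module

variable {E : Type*} [AddCommGroup E] [Module ℂ E]

lemma dft_comp_add_right (Φ : ZMod M → E) (a k : ZMod M) :
    𝓕 (fun j ↦ Φ (j + a)) k = stdAddChar (a * k) • 𝓕 Φ k := by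
  simp only [dft_apply, Finset.smul_sum, smul_smul, ← AddChar.map_add_eq_mul]
  refine Fintype.sum_equiv (Equiv.addRight a) _ _ fun j ↦ ?_
  simp only [Equiv.coe_addRight]
  ring_nf

lemma dft_single (x : E) (k₀ n : ZMod M) :
    𝓕 (Pi.single k₀ x) n = stdAddChar (-(k₀ * n)) • x := by
  simp [dft_apply, Pi.single_apply]

lemma dft_cyclicLaplacian (c : ZMod M → E) (n : ZMod M) :
    𝓕 (cyclicLaplacian M c) n = -cyclicLaplacianEigenvalue M n • 𝓕 c n := by
  have hΔ : cyclicLaplacian M c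
      = ((M : ℂ) ^ 2) • ((fun j ↦ c (j + 1)) + (fun j ↦ c (j + -1)) - (2 : ℂ) • c) := by
    funext k
    simp [cyclicLaplacian, sub_eq_add_neg, ← Complex.coe_smul]
  have hconj : stdAddChar (-1 * n) = (starRingEnd ℂ) (stdAddChar n) := by
    rw [neg_one_mul, AddChar.map_neg_eq_conj]
  rw [hΔ, _root_.map_smul, map_sub, map_add, _root_.map_smul]
  simp only [Pi.smul_apply, Pi.add_apply, Pi.sub_apply, dft_comp_add_right, one_mul, hconj,
    ← Complex.coe_smul, smul_smul, ← sub_smul, ← add_smul]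
  congr 1
  rw [Complex.add_conj, cyclicLaplacianEigenvalue]
  push_cast
  ring

end Module

section Normed

variable {E : Type*} [NormedAddCommGroup E] [NormedSpace ℂ E]

lemma norm_le_inv_mul_sum_norm_dft (Φ : ZMod M → E) (k : ZMod M) :
    ‖Φ k‖ ≤ (M : ℝ)⁻¹ * ∑ n, ‖𝓕 Φ n‖ :=
  calc ‖Φ k‖ = ‖𝓕⁻ (𝓕 Φ) k‖ := by rw [LinearEquiv.symm_apply_apply]
    _ = (M : ℝ)⁻¹ * ‖∑ n, stdAddChar (n * k) • 𝓕 Φ n‖ := by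
      rw [invDFT_apply, norm_smul, norm_inv, Complex.norm_natCast]
    _ ≤ (M : ℝ)⁻¹ * ∑ n, ‖𝓕 Φ n‖ := by
      gcongr
      refine (norm_sum_le _ _).trans_eq (Finset.sum_congr rfl fun n _ ↦ ?_)
      rw [norm_smul, AddChar.norm_apply, one_mul]

lemma hasDerivAt_dft {y : ℝ → ZMod M → E} {y' : ZMod M → E} {t : ℝ} (hy : HasDerivAt y y' t)
    (n : ZMod M) : HasDerivAt (fun u ↦ 𝓕 (y u) n) (𝓕 y' n) t := by
  simp only [dft_apply]
  exact HasDerivAt.fun_sum fun j _ ↦ (hasDerivAt_pi.1 hy j).const_smul _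

end Normed

end Fourier

section Duhamel

variable {F : Type*} [NormedAddCommGroup F] [NormedSpace ℝ F]

def expConv (L : ℝ) (b : ℝ → F) (t : ℝ) : F :=
  ∫ s in 0..t, Real.exp (-L * (t - s)) • b s

lemma eq_expConv_of_hasDerivAt [CompleteSpace F] {L T t : ℝ} {c b : ℝ → F} (hc0 : c 0 = 0)
    (hb : IntegrableOn b (Icc 0 T)) (hc : ∀ s ∈ Icc 0 T, HasDerivAt c (-L • c s + b s) s)
    (ht : t ∈ Icc 0 T) : c t = expConv L b t := by
  have hsub : uIcc 0 t ⊆ Icc 0 T := by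
    rw [uIcc_of_le ht.1]
    exact Icc_subset_Icc_right ht.2
  have hderiv : ∀ s ∈ uIcc 0 t,
      HasDerivAt (fun u ↦ Real.exp (L * u) • c u) (Real.exp (L * s) • b s) s := by
    intro s hs
    have hexp : HasDerivAt (fun u ↦ Real.exp (L * u)) (Real.exp (L * s) * L) s := by
      simpa using ((hasDerivAt_id s).const_mul L).exp
    convert hexp.fun_smul (hc s (hsub hs)) using 1
    rw [smul_add, smul_smul]
    module
  have hint : IntervalIntegrable (fun s ↦ Real.exp (L * s) • b s) volume 0 t :=
    (hb.mono_set hsub).intervalIntegrable.continuousOn_smul (by fun_prop)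
  have hftc := intervalIntegral.integral_eq_sub_of_hasDerivAt hderiv hint
  rw [hc0, smul_zero, sub_zero] at hftc
  calc c t = Real.exp (-L * t) • (Real.exp (L * t) • c t) := by
        rw [smul_smul, ← Real.exp_add]
        simp
    _ = expConv L b t := by
        rw [← hftc, expConv, ← intervalIntegral.integral_smul]
        congr 1
        funext s
        rw [smul_smul, ← Real.exp_add]
        ring_nf

lemma norm_expConv_le {L t : ℝ} {b : ℝ → F} {f : ℝ → ℝ} (ht : 0 ≤ t)
    (hbf : ∀ s ∈ Icc 0 t, ‖b s‖ ≤ f s) (hf : IntervalIntegrable f volume 0 t) :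
    ‖expConv L b t‖ ≤ expConv L f t := by
  refine intervalIntegral.norm_integral_le_of_norm_le ht (ae_of_all _ fun s hs ↦ ?_)
    (hf.continuousOn_smul (by fun_prop))
  rw [norm_smul, Real.norm_of_nonneg (Real.exp_pos _).le, smul_eq_mul]
  exact mul_le_mul_of_nonneg_left (hbf s (Ioc_subset_Icc_self hs)) (Real.exp_pos _).le

lemma mul_integral_exp_neg_mul_sub_le (L s T : ℝ) :
    L * ∫ t in s..T, Real.exp (-L * (t - s)) ≤ 1 := by
  have hderiv : ∀ t ∈ uIcc s T,
      HasDerivAt (fun u ↦ -Real.exp (-L * (u - s))) (L * Real.exp (-L * (t - s))) t := by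
    intro t _
    exact (((hasDerivAt_id' t).sub_const s).const_mul (-L)).exp.fun_neg.congr_deriv (by ring)
  rw [← intervalIntegral.integral_const_mul,
    intervalIntegral.integral_eq_sub_of_hasDerivAt hderiv
      (Continuous.intervalIntegrable (by fun_prop) _ _)]
  simp [(Real.exp_pos _).le]

end Duhamel

section Fubini

variable {L T : ℝ} {f : ℝ → ℝ}

def expConvKernel (L : ℝ) (f : ℝ → ℝ) : ℝ × ℝ → ℝ :=
  {p | p.2 ≤ p.1}.indicator fun p ↦ Real.exp (-L * (p.1 - p.2)) * f p.2

lemma integrable_expConvKernel (hL : 0 ≤ L) (hf0 : 0 ≤ f) (hf : IntegrableOn f (Icc 0 T)) :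
    Integrable (expConvKernel L f)
      ((volume.restrict (Icc 0 T)).prod (volume.restrict (Icc 0 T))) := by
  have hdom : Integrable (fun p : ℝ × ℝ ↦ f p.2)
      ((volume.restrict (Icc 0 T)).prod (volume.restrict (Icc 0 T))) := by
    have : IsFiniteMeasure (volume.restrict (Icc (0 : ℝ) T)) := by
      rw [isFiniteMeasure_restrict]; exact measure_Icc_lt_top.ne
    simpa using (integrable_const (1 : ℝ)).mul_prod hf
  refine hdom.mono' ((Continuous.aestronglyMeasurable (by fun_prop)).mul hf.1.comp_snd
    |>.indicator (measurableSet_le measurable_snd measurable_fst)) (ae_of_all _ fun p ↦ ?_)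
  rw [expConvKernel, norm_indicator_eq_indicator_norm]
  refine indicator_le' (fun p hp ↦ ?_) (fun p _ ↦ hf0 p.2) p
  have hexp : Real.exp (-L * (p.1 - p.2)) ≤ 1 :=
    Real.exp_le_one_iff.2 (mul_nonpos_of_nonpos_of_nonneg (neg_nonpos.2 hL) (sub_nonneg.2 hp))
  rw [norm_mul, Real.norm_of_nonneg (Real.exp_pos _).le, Real.norm_of_nonneg (hf0 p.2)]
  exact mul_le_of_le_one_left (hf0 p.2) hexp

lemma setIntegral_expConvKernel_right {t : ℝ} (ht : t ∈ Icc 0 T) :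
    ∫ s in Icc 0 T, expConvKernel L f (t, s) = expConv L f t := by
  change ∫ s in Icc 0 T, (Iic t).indicator (fun s ↦ Real.exp (-L * (t - s)) * f s) s = _
  have hIcc : Iic t ∩ Icc 0 T = Icc 0 t := by
    ext u; simp only [mem_inter_iff, mem_Iic, mem_Icc]; constructor <;> intro h <;> grind
  rw [integral_indicator measurableSet_Iic, Measure.restrict_restrict measurableSet_Iic, hIcc,
    integral_Icc_eq_integral_Ioc, ← intervalIntegral.integral_of_le ht.1]
  rfl

lemma mul_setIntegral_expConvKernel_left_le (hf0 : 0 ≤ f) {s : ℝ} (hs : s ∈ Icc 0 T) :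
    L * ∫ t in Icc 0 T, expConvKernel L f (t, s) ≤ f s := by
  change L * ∫ t in Icc 0 T, (Ici s).indicator (fun t ↦ Real.exp (-L * (t - s)) * f s) t ≤ _
  have hIcc : Ici s ∩ Icc 0 T = Icc s T := by
    ext u; simp only [mem_inter_iff, mem_Ici, mem_Icc]; constructor <;> intro h <;> grind
  rw [integral_indicator measurableSet_Ici, Measure.restrict_restrict measurableSet_Ici, hIcc,
    integral_Icc_eq_integral_Ioc, ← intervalIntegral.integral_of_le hs.2,
    intervalIntegral.integral_mul_const, ← mul_assoc]
  exact mul_le_of_le_one_left (hf0 s) (mul_integral_exp_neg_mul_sub_le L s T)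

lemma integrableOn_expConv (hL : 0 ≤ L) (hf0 : 0 ≤ f) (hf : IntegrableOn f (Icc 0 T)) :
    IntegrableOn (expConv L f) (Icc 0 T) :=
  (integrable_expConvKernel hL hf0 hf).integral_prod_left.congr
    (ae_restrict_of_forall_mem measurableSet_Icc fun _ ht ↦ setIntegral_expConvKernel_right ht)

lemma mul_integral_expConv_le (hL : 0 ≤ L) (hf0 : 0 ≤ f) (hf : IntegrableOn f (Icc 0 T)) :
    L * ∫ t in Icc 0 T, expConv L f t ≤ ∫ t in Icc 0 T, f t :=
  calc L * ∫ t in Icc 0 T, expConv L f t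
      = L * ∫ t in Icc 0 T, ∫ s in Icc 0 T, expConvKernel L f (t, s) := by
        rw [setIntegral_congr_fun measurableSet_Icc fun _ ht ↦ setIntegral_expConvKernel_right ht]
    _ = ∫ s in Icc 0 T, L * ∫ t in Icc 0 T, expConvKernel L f (t, s) := by
        rw [integral_integral_swap (f := fun t s ↦ expConvKernel L f (t, s))
          (integrable_expConvKernel hL hf0 hf), integral_const_mul]
    _ ≤ ∫ s in Icc 0 T, f s :=
        integral_mono_of_nonneg (ae_of_all _ fun s ↦ mul_nonneg hL (integral_nonneg fun t ↦
          indicator_nonneg (fun p _ ↦ mul_nonneg (Real.exp_pos _).le (hf0 _)) _)) hf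
          (ae_restrict_of_forall_mem measurableSet_Icc fun _ hs ↦
            mul_setIntegral_expConvKernel_left_le hf0 hs)

end Fubini

section HeatEquation

variable {M : ℕ} [NeZero M] {T : ℝ} {f : ℝ → ℝ}

def laplacianDuhamelBound (M : ℕ) [NeZero M] (f : ℝ → ℝ) (t : ℝ) : ℝ :=
  (M : ℝ)⁻¹ * ∑ n : ZMod M,
    cyclicLaplacianEigenvalue M n * expConv (cyclicLaplacianEigenvalue M n) f t

lemma integrableOn_laplacianDuhamelBound (hf0 : 0 ≤ f) (hf : IntegrableOn f (Icc 0 T)) :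
    IntegrableOn (laplacianDuhamelBound M f) (Icc 0 T) :=
  (integrable_finsetSum _ fun n _ ↦ (integrableOn_expConv
    (cyclicLaplacianEigenvalue_nonneg M n) hf0 hf).const_mul _).const_mul _

lemma integral_laplacianDuhamelBound_le (hf0 : 0 ≤ f) (hf : IntegrableOn f (Icc 0 T)) :
    ∫ t in Icc 0 T, laplacianDuhamelBound M f t ≤ ∫ t in Icc 0 T, f t := by
  have hint n := (integrableOn_expConv (cyclicLaplacianEigenvalue_nonneg M n) hf0 hf).const_mul
    (cyclicLaplacianEigenvalue M n)
  simp only [laplacianDuhamelBound]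
  rw [integral_const_mul, integral_finsetSum _ fun n _ ↦ hint n]
  calc (M : ℝ)⁻¹ * ∑ n : ZMod M, ∫ t in Icc 0 T,
        cyclicLaplacianEigenvalue M n * expConv (cyclicLaplacianEigenvalue M n) f t
      ≤ (M : ℝ)⁻¹ * ∑ _n : ZMod M, ∫ t in Icc 0 T, f t := by
        refine mul_le_mul_of_nonneg_left (Finset.sum_le_sum fun n _ ↦ ?_) (by positivity)
        rw [integral_const_mul]
        exact mul_integral_expConv_le (cyclicLaplacianEigenvalue_nonneg M n) hf0 hf
    _ = ∫ t in Icc 0 T, f t := by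
        rw [Finset.sum_const, Finset.card_univ, ZMod.card, nsmul_eq_mul, ← mul_assoc,
          inv_mul_cancel₀ (NeZero.ne _), one_mul]

theorem norm_cyclicLaplacian_le_of_hasDerivAt_complex {E : Type*} [NormedAddCommGroup E]
    [NormedSpace ℂ E] [CompleteSpace E] {t : ℝ} {y : ℝ → ZMod M → E} {b : ℝ → E} {k₀ : ZMod M}
    (hy0 : y 0 = 0) (hb : IntegrableOn b (Icc 0 T)) (hf : IntegrableOn f (Icc 0 T))
    (hbf : ∀ s ∈ Icc 0 T, ‖b s‖ ≤ f s)
    (hy : ∀ s ∈ Icc 0 T, HasDerivAt y (cyclicLaplacian M (y s) + Pi.single k₀ (b s)) s)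
    (ht : t ∈ Icc 0 T) (k : ZMod M) :
    ‖cyclicLaplacian M (y t) k‖ ≤ laplacianDuhamelBound M f t := by
  have hmode (n : ZMod M) : ‖𝓕 (y t) n‖ ≤ expConv (cyclicLaplacianEigenvalue M n) f t := by
    have hc : ∀ s ∈ Icc 0 T, HasDerivAt (fun u ↦ 𝓕 (y u) n)
        (-cyclicLaplacianEigenvalue M n • 𝓕 (y s) n + stdAddChar (-(k₀ * n)) • b s) s := by
      intro s hs
      simpa only [map_add, Pi.add_apply, dft_cyclicLaplacian, dft_single]
        using hasDerivAt_dft (hy s hs) n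
    rw [eq_expConv_of_hasDerivAt (by simp [hy0]) (hb.smul _) hc ht]
    refine norm_expConv_le ht.1 (fun s hs ↦ ?_)
      (hf.mono_set (by rw [uIcc_of_le ht.1]; exact Icc_subset_Icc_right ht.2)).intervalIntegrable
    rw [Pi.smul_apply, norm_smul, AddChar.norm_apply, one_mul]
    exact hbf s ⟨hs.1, hs.2.trans ht.2⟩
  calc ‖cyclicLaplacian M (y t) k‖ ≤ (M : ℝ)⁻¹ * ∑ n, ‖𝓕 (cyclicLaplacian M (y t)) n‖ :=
        norm_le_inv_mul_sum_norm_dft _ _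
    _ = (M : ℝ)⁻¹ * ∑ n, cyclicLaplacianEigenvalue M n * ‖𝓕 (y t) n‖ := by
        simp only [dft_cyclicLaplacian, norm_smul, norm_neg, Real.norm_of_nonneg
          (cyclicLaplacianEigenvalue_nonneg M _)]
    _ ≤ laplacianDuhamelBound M f t := by
        unfold laplacianDuhamelBound
        gcongr with n
        · exact cyclicLaplacianEigenvalue_nonneg M n
        · exact hmode n

theorem norm_cyclicLaplacian_le_of_hasDerivAt {E : Type*} [NormedAddCommGroup E]
    [NormedSpace ℝ E] {t : ℝ} {u : ℝ → ZMod M → E} {w : ℝ → E} {k₀ : ZMod M}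
    (hu0 : u 0 = 0) (hw : IntegrableOn w (Icc 0 T))
    (hu : ∀ s ∈ Icc 0 T, HasDerivAt u (cyclicLaplacian M (u s) + Pi.single k₀ (w s)) s)
    (ht : t ∈ Icc 0 T) (k : ZMod M) :
    ‖cyclicLaplacian M (u t) k‖ ≤ laplacianDuhamelBound M (fun s ↦ ‖w s‖) t := by
  obtain ⟨g, hg, hgx⟩ := exists_dual_vector'' ℝ (cyclicLaplacian M (u t) k)
  set φ : E →L[ℝ] ℂ := Complex.ofRealCLM ∘L g
  have hφ (x : E) : ‖φ x‖ ≤ ‖x‖ := by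
    simpa [φ] using g.le_of_opNorm_le hg x
  have hφΔ (c : ZMod M → E) (j : ZMod M) :
      φ (cyclicLaplacian M c j) = cyclicLaplacian M (fun i ↦ φ (c i)) j :=
    map_cyclicLaplacian φ.toLinearMap M c j
  have hy : ∀ s ∈ Icc 0 T, HasDerivAt (fun r j ↦ φ (u r j))
      (cyclicLaplacian M (fun j ↦ φ (u s j)) + Pi.single k₀ (φ (w s))) s := by
    intro s hs
    refine hasDerivAt_pi.2 fun j ↦ ?_
    refine (φ.hasFDerivAt.comp_hasDerivAt s (hasDerivAt_pi.1 (hu s hs) j)).congr_deriv ?_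
    simp only [Pi.add_apply, map_add, hφΔ, Pi.single_apply, apply_ite φ, map_zero]
  calc ‖cyclicLaplacian M (u t) k‖ = ‖φ (cyclicLaplacian M (u t) k)‖ := by
        simp only [φ, ContinuousLinearMap.comp_apply, hgx, RCLike.ofReal_real_eq_id, id,
          Complex.ofRealCLM_apply, Complex.norm_real, norm_norm]
    _ = ‖cyclicLaplacian M (fun j ↦ φ (u t j)) k‖ := by rw [hφΔ]
    _ ≤ laplacianDuhamelBound M (fun s ↦ ‖w s‖) t :=
        norm_cyclicLaplacian_le_of_hasDerivAt_complex (by ext; simp [hu0]) (φ.integrable_comp hw)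
          hw.norm (fun s _ ↦ hφ (w s)) hy ht k

theorem integral_iSup_norm_cyclicLaplacian_le {E : Type*} [NormedAddCommGroup E]
    [NormedSpace ℝ E] {u : ℝ → ZMod M → E} {w : ℝ → E} {k₀ : ZMod M}
    (hu0 : u 0 = 0) (hw : IntegrableOn w (Icc 0 T))
    (hu : ∀ s ∈ Icc 0 T, HasDerivAt u (cyclicLaplacian M (u s) + Pi.single k₀ (w s)) s) :
    ∫ t in Icc 0 T, ⨆ k, ‖cyclicLaplacian M (u t) k‖ ≤ ∫ t in Icc 0 T, ‖w t‖ :=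
  calc ∫ t in Icc 0 T, ⨆ k, ‖cyclicLaplacian M (u t) k‖
      ≤ ∫ t in Icc 0 T, laplacianDuhamelBound M (fun s ↦ ‖w s‖) t :=
        integral_mono_of_nonneg (ae_of_all _ fun _ ↦ Real.iSup_nonneg fun _ ↦ norm_nonneg _)
          (integrableOn_laplacianDuhamelBound (fun _ ↦ norm_nonneg _) hw.norm)
          (ae_restrict_of_forall_mem measurableSet_Icc fun _ ht ↦
            ciSup_le (norm_cyclicLaplacian_le_of_hasDerivAt hu0 hw hu ht))
    _ ≤ ∫ t in Icc 0 T, ‖w t‖ :=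
        integral_laplacianDuhamelBound_le (fun _ ↦ norm_nonneg _) hw.norm

end HeatEquation

theorem stmt16_general (d : ℕ) (T : ℝ) :
    ∃ C : ℝ, 0 < C ∧
      ∀ (N : ℕ) (A : ℝ), 0 < A →
      ∀ (k₀ : Fin (N + 1)) (v : ℝ → EuclideanSpace ℝ (Fin d)),
        Measurable v →
        IntegrableOn (fun s => ‖v s‖) (Icc (0:ℝ) T) →
      ∀ ii : ℝ → Fin (N + 1) → EuclideanSpace ℝ (Fin d),
        ii 0 = 0 →
        (∀ t ∈ Icc (0:ℝ) T, HasDerivAt ii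
          (fun k => (((N : ℝ) + 1) ^ 2) • (ii t (k + 1) + ii t (k - 1) - (2:ℝ) • ii t k)
            + (if k = k₀ then (1 / A) • v t else 0)) t) →
        (∫ t in Icc (0:ℝ) T,
            ⨆ k : Fin (N + 1),
              ‖(((N : ℝ) + 1) ^ 2) • (ii t (k + 1) + ii t (k - 1) - (2:ℝ) • ii t k)‖)
          ≤ (C / A) * ∫ s in Icc (0:ℝ) T, ‖v s‖ := by
  refine ⟨1, one_pos, fun N A hA k₀ v hv hvi ii hii0 hii ↦ ?_⟩
  have hw : IntegrableOn (fun s ↦ (1 / A) • v s) (Icc 0 T) :=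
    ((integrable_norm_iff hv.aestronglyMeasurable).1 hvi).smul (1 / A)
  have hu (t : ℝ) (ht : t ∈ Icc 0 T) : HasDerivAt ii
      (cyclicLaplacian (N + 1) (ii t)
        + (Pi.single k₀ ((1 / A) • v t) : ZMod (N + 1) → EuclideanSpace ℝ (Fin d))) t := by
    refine (hii t ht).congr_deriv (funext fun k ↦ ?_)
    exact congrArg₂ (· + ·) (cyclicLaplacian_succ_apply N (ii t) k).symm
      (Pi.single_apply _ _ _).symm
  calc _ = ∫ t in Icc 0 T, ⨆ k, ‖cyclicLaplacian (N + 1) (ii t) k‖ :=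
        congrArg (fun F : ℝ → ℝ ↦ ∫ t in Icc 0 T, F t) <| funext fun t ↦
          iSup_congr fun k ↦ congrArg norm (cyclicLaplacian_succ_apply N (ii t) k).symm
    _ ≤ ∫ t in Icc 0 T, ‖(1 / A) • v t‖ := integral_iSup_norm_cyclicLaplacian_le hii0 hw hu
    _ = (1 / A) * ∫ s in Icc 0 T, ‖v s‖ := by
        simp only [norm_smul, Real.norm_of_nonneg (one_div_pos.2 hA).le, integral_const_mul]

/-- Let `Δ^{(N)}` be the discrete Laplacian on families of coefficients
indexed cyclically by the `N+1` sites of the discretized torus, with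
`(Δ^{(N)} c)_k = (N+1)²(c_{k+1} + c_{k−1} − 2c_k)`, and let `ϱ_s` be supported at a single
site `k₀` with value `v_s/A`. If `(ii)_t = ∫_0^t e^{(t−s)Δ^{(N)}} ϱ_s ds`, i.e. `ii 0 = 0`
and `ii' = Δ^{(N)} ii + ϱ`, then `∫_0^T sup_k |Δ^{(N)}(ii)_t|_k dt ≤ (C/A) ∫_0^T |v_s| ds`,
for a constant `C` depending only on `T` (and not on `N`, `A`, `k₀`, or `v`). -/
theorem stmt16 (d : ℕ) (T : ℝ) (hT : 0 < T) :
    ∃ C : ℝ, 0 < C ∧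
      ∀ (N : ℕ) (A : ℝ), 0 < A →
      ∀ (k₀ : Fin (N + 1)) (v : ℝ → EuclideanSpace ℝ (Fin d)),
        Measurable v →
        IntegrableOn (fun s => ‖v s‖) (Icc (0:ℝ) T) →
      ∀ ii : ℝ → Fin (N + 1) → EuclideanSpace ℝ (Fin d),
        ii 0 = 0 →
        (∀ t ∈ Icc (0:ℝ) T, HasDerivAt ii
          (fun k => (((N : ℝ) + 1) ^ 2) • (ii t (k + 1) + ii t (k - 1) - (2:ℝ) • ii t k)
            + (if k = k₀ then (1 / A) • v t else 0)) t) →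
        (∫ t in Icc (0:ℝ) T,
            ⨆ k : Fin (N + 1),
              ‖(((N : ℝ) + 1) ^ 2) • (ii t (k + 1) + ii t (k - 1) - (2:ℝ) • ii t k)‖)
          ≤ (C / A) * ∫ s in Icc (0:ℝ) T, ‖v s‖ :=
  stmt16_general d T
end
end
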